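/- arXiv:1001.0737 — 7 statements merged into one kernel-verified Lean document; each statement's English description precedes it below -/
import Mathlib

section
/- Let ε, M, L > 0. Suppose f : [β,γ] × Xⁿ → X is continuous, ‖f(t,u₁,…,uₙ)‖ ≤ M for all t ∈ [β,γ] and all u₁,…,uₙ ∈ I(φ,ε), and f satisfies the Lipschitz condition ‖f(t,u₁,…,uₙ) − f(t,v₁,…,vₙ)‖ ≤ L·Σ_{i=1}^{n} ‖u_i − v_i‖ for all t ∈ [β,γ] and all u₁,…,uₙ,v₁,…,vₙ ∈ I(φ,ε). Set δ = min{γ − β, ε/M} and ζ = β + δ. Then there exists exactly one function x : [α,ζ] → X such that: x is continuous on [α,ζ]; x(t) = φ(t) for all t ∈ [α,β]; ‖x(t) − φ(β)‖ ≤ ε for all t ∈ [β,ζ]; and x is differentiable on [β,ζ] with x′(t) = f(t, x(τ₁(t)), x(τ₂(t)), …, x(τₙ(t))) for all t ∈ [β,ζ]. -/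
/-!
The solution is the fixed point of the Picard operator
`T x t = φ (min t β) + ∫_β^{max t β} f(s, x(τ₁ s), …, x(τₙ s)) ds`
on the complete metric space of continuous functions on `[α, ζ]` that agree with `φ` on `[α, β]`
and stay within `ε` of `φ β` on `[β, ζ]`; the bound `M (ζ - β) ≤ ε` makes this set invariant.
Because every delay satisfies `τᵢ s ≤ s`, the Lipschitz condition gives by induction
`‖Tᵏx t - Tᵏy t‖ ≤ (n L (t - β))ᵏ / k! · ‖x - y‖`, so some iterate of `T` is a contraction and
`T` has exactly one fixed point. By the fundamental theorem of calculus the fixed points of `T` are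
exactly the solutions of the delay equation.
-/

open Set Function MeasureTheory intervalIntegral ContinuousMap

lemma norm_integral_le_pow_div_factorial {E : Type*} [NormedAddCommGroup E] [NormedSpace ℝ E]
    {g : ℝ → E} {a b K d : ℝ} {k : ℕ} (hab : a ≤ b)
    (hg : ∀ s ∈ Ioc a b, ‖g s‖ ≤ K ^ (k + 1) * (s - a) ^ k / k.factorial * d) :
    ‖∫ s in a..b, g s‖ ≤ (K * (b - a)) ^ (k + 1) / (k + 1).factorial * d := by
  calc ‖∫ s in a..b, g s‖ ≤ ∫ s in a..b, K ^ (k + 1) * (s - a) ^ k / k.factorial * d :=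
        norm_integral_le_of_norm_le hab (ae_of_all _ hg)
          (Continuous.intervalIntegrable (by fun_prop) _ _)
    _ = (K * (b - a)) ^ (k + 1) / (k + 1).factorial * d := by
        rw [integral_comp_sub_right (fun s => K ^ (k + 1) * s ^ k / k.factorial * d) a,
          intervalIntegral.integral_mul_const, intervalIntegral.integral_div,
          intervalIntegral.integral_const_mul, integral_pow, sub_self,
          zero_pow k.succ_ne_zero, sub_zero, Nat.factorial_succ, mul_pow]
        push_cast
        field_simp

namespace DelayODE

variable {X : Type*} [NormedAddCommGroup X] {ι : Type*}

/-- The set `I(φ, ε)` of the paper. -/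
def tube (φ : ℝ → X) (α β ε : ℝ) : Set X := {v | ∃ s ∈ Icc α β, ‖v - φ s‖ ≤ ε}

def Admissible (φ : ℝ → X) (α β ζ ε : ℝ) (x : ℝ → X) : Prop :=
  EqOn x φ (Icc α β) ∧ ∀ t ∈ Icc β ζ, ‖x t - φ β‖ ≤ ε

variable {τ : ι → ℝ → ℝ} {φ : ℝ → X} {f : ℝ → (ι → X) → X} {α β ζ ε M L : ℝ} {x y : ℝ → X}

lemma Admissible.mem_tube (hx : Admissible φ α β ζ ε x) (hαβ : α ≤ β) (hε : 0 ≤ ε) {t : ℝ}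
    (ht : t ∈ Icc α ζ) : x t ∈ tube φ α β ε := by
  rcases le_total t β with htβ | hβt
  · exact ⟨t, ⟨ht.1, htβ⟩, by rw [hx.1 ⟨ht.1, htβ⟩, sub_self, norm_zero]; exact hε⟩
  · exact ⟨β, ⟨hαβ, le_rfl⟩, hx.2 t ⟨hβt, ht.2⟩⟩

lemma Admissible.congr (hx : Admissible φ α β ζ ε x) (hαβ : α ≤ β) (hβζ : β ≤ ζ)
    (hxy : EqOn x y (Icc α ζ)) : Admissible φ α β ζ ε y := by
  refine ⟨fun t ht => ?_, fun t ht => ?_⟩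
  · rw [← hxy (Icc_subset_Icc_right hβζ ht)]
    exact hx.1 ht
  · rw [← hxy (Icc_subset_Icc_left hαβ ht)]
    exact hx.2 t ht

lemma admissible_history (hε : 0 ≤ ε) : Admissible φ α β ζ ε (fun t => φ (min t β)) :=
  ⟨fun t ht => congrArg φ (min_eq_left ht.2), fun t ht => by
    simpa only [min_eq_right ht.1, sub_self, norm_zero] using hε⟩

lemma continuousOn_history_min (hφ : ContinuousOn φ (Icc α β)) (hαβ : α ≤ β) :
    ContinuousOn (fun t => φ (min t β)) (Icc α ζ) :=
  hφ.comp (continuous_id.min continuous_const).continuousOn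
    fun _ ht => ⟨le_min ht.1 hαβ, min_le_right _ _⟩

section

variable [NormedSpace ℝ X]

noncomputable def picard (τ : ι → ℝ → ℝ) (φ : ℝ → X) (f : ℝ → (ι → X) → X) (β : ℝ)
    (x : ℝ → X) (t : ℝ) : X :=
  φ (min t β) + ∫ s in β..max t β, f s (fun i => x (τ i s))

lemma picard_of_le {t : ℝ} (ht : t ≤ β) : picard τ φ f β x t = φ t := by
  rw [picard, min_eq_left ht, max_eq_right ht, integral_same, add_zero]

lemma picard_of_ge {t : ℝ} (ht : β ≤ t) :
    picard τ φ f β x t = φ β + ∫ s in β..t, f s (fun i => x (τ i s)) := by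
  rw [picard, min_eq_right ht, max_eq_left ht]

end

variable [Fintype ι]

structure IsPicardLindelof (τ : ι → ℝ → ℝ) (φ : ℝ → X) (f : ℝ → (ι → X) → X)
    (α β ζ ε M L : ℝ) : Prop where
  le_left : α ≤ β
  le_right : β ≤ ζ
  continuousOn_delay : ∀ i, ContinuousOn (τ i) (Icc β ζ)
  delay_mem : ∀ i, ∀ t ∈ Icc β ζ, τ i t ∈ Icc α t
  continuousOn_history : ContinuousOn φ (Icc α β)
  continuousOn_uncurry : ContinuousOn (uncurry f) (Icc β ζ ×ˢ univ)
  norm_le : ∀ t ∈ Icc β ζ, ∀ u : ι → X, (∀ i, u i ∈ tube φ α β ε) → ‖f t u‖ ≤ M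
  norm_sub_le : ∀ t ∈ Icc β ζ, ∀ u v : ι → X, (∀ i, u i ∈ tube φ α β ε) →
    (∀ i, v i ∈ tube φ α β ε) → ‖f t u - f t v‖ ≤ L * ∑ i, ‖u i - v i‖
  nonneg_M : 0 ≤ M
  nonneg_L : 0 ≤ L
  mul_le : M * (ζ - β) ≤ ε

namespace IsPicardLindelof

lemma nonneg_ε (h : IsPicardLindelof τ φ f α β ζ ε M L) : 0 ≤ ε :=
  (mul_nonneg h.nonneg_M (sub_nonneg.2 h.le_right)).trans h.mul_le

lemma nonneg_card_mul (h : IsPicardLindelof τ φ f α β ζ ε M L) : 0 ≤ Fintype.card ι * L :=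
  mul_nonneg (Nat.cast_nonneg _) h.nonneg_L

lemma delay_mem_Icc (h : IsPicardLindelof τ φ f α β ζ ε M L) (i : ι) {t : ℝ}
    (ht : t ∈ Icc β ζ) : τ i t ∈ Icc α ζ :=
  ⟨(h.delay_mem i t ht).1, (h.delay_mem i t ht).2.trans ht.2⟩

lemma delay_mem_tube (h : IsPicardLindelof τ φ f α β ζ ε M L) (hx : Admissible φ α β ζ ε x)
    {t : ℝ} (ht : t ∈ Icc β ζ) (i : ι) : x (τ i t) ∈ tube φ α β ε :=
  hx.mem_tube h.le_left h.nonneg_ε (h.delay_mem_Icc i ht)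

lemma continuousOn_comp (h : IsPicardLindelof τ φ f α β ζ ε M L)
    (hx : ContinuousOn x (Icc α ζ)) :
    ContinuousOn (fun s => f s (fun i => x (τ i s))) (Icc β ζ) :=
  h.continuousOn_uncurry.comp
    (continuousOn_id.prodMk (continuousOn_pi.2 fun i =>
      hx.comp (h.continuousOn_delay i) fun _ => h.delay_mem_Icc i))
    fun _ _ => mem_prod.2 ⟨‹_›, mem_univ _⟩

lemma intervalIntegrable_comp (h : IsPicardLindelof τ φ f α β ζ ε M L)
    (hx : ContinuousOn x (Icc α ζ)) {t : ℝ} (ht : t ∈ Icc β ζ) :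
    IntervalIntegrable (fun s => f s (fun i => x (τ i s))) volume β t :=
  ((h.continuousOn_comp hx).mono
    (uIcc_subset_Icc (left_mem_Icc.2 h.le_right) ht)).intervalIntegrable

variable [NormedSpace ℝ X]

lemma picard_congr (h : IsPicardLindelof τ φ f α β ζ ε M L) (hxy : EqOn x y (Icc α ζ)) :
    EqOn (picard τ φ f β x) (picard τ φ f β y) (Icc α ζ) := by
  intro t ht
  refine congrArg (φ (min t β) + ·) (integral_congr fun s hs => ?_)
  rw [uIcc_of_le (le_max_right t β)] at hs
  have hs' : s ∈ Icc β ζ := ⟨hs.1, hs.2.trans (max_le ht.2 h.le_right)⟩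
  simp only [hxy (h.delay_mem_Icc _ hs')]

lemma admissible_picard (h : IsPicardLindelof τ φ f α β ζ ε M L) (hx : Admissible φ α β ζ ε x) :
    Admissible φ α β ζ ε (picard τ φ f β x) := by
  refine ⟨fun t ht => picard_of_le ht.2, fun t ht => ?_⟩
  rw [picard_of_ge ht.1, add_sub_cancel_left]
  calc ‖∫ s in β..t, f s (fun i => x (τ i s))‖ ≤ M * |t - β| :=
        norm_integral_le_of_norm_le_const fun s hs => by
          rw [uIoc_of_le ht.1] at hs
          have hs' : s ∈ Icc β ζ := ⟨hs.1.le, hs.2.trans ht.2⟩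
          exact h.norm_le s hs' _ (h.delay_mem_tube hx hs')
    _ ≤ M * (ζ - β) := by
        rw [abs_of_nonneg (sub_nonneg.2 ht.1)]
        exact mul_le_mul_of_nonneg_left (by linarith [ht.2]) h.nonneg_M
    _ ≤ ε := h.mul_le

lemma norm_picard_sub_picard_le (h : IsPicardLindelof τ φ f α β ζ ε M L)
    (hx : Admissible φ α β ζ ε x) (hy : Admissible φ α β ζ ε y)
    (hxc : ContinuousOn x (Icc α ζ)) (hyc : ContinuousOn y (Icc α ζ)) {k : ℕ} {d : ℝ}
    (hd : 0 ≤ d)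
    (hxy : ∀ r ∈ Icc β ζ,
      ‖x r - y r‖ ≤ (Fintype.card ι * L * (r - β)) ^ k / k.factorial * d)
    {t : ℝ} (ht : t ∈ Icc β ζ) :
    ‖picard τ φ f β x t - picard τ φ f β y t‖ ≤
      (Fintype.card ι * L * (t - β)) ^ (k + 1) / (k + 1).factorial * d := by
  rw [picard_of_ge ht.1, picard_of_ge ht.1, add_sub_add_left_eq_sub,
    ← integral_sub (h.intervalIntegrable_comp hxc ht) (h.intervalIntegrable_comp hyc ht)]
  refine norm_integral_le_pow_div_factorial ht.1 fun s hs => ?_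
  have hs' : s ∈ Icc β ζ := ⟨hs.1.le, hs.2.trans ht.2⟩
  -- A delayed time `τ i s` either lies in the history, where `x = y`, or in `[β, s]`.
  have hdelay : ∀ i, ‖x (τ i s) - y (τ i s)‖ ≤
      (Fintype.card ι * L * (s - β)) ^ k / k.factorial * d := by
    intro i
    have hK := h.nonneg_card_mul
    rcases le_total (τ i s) β with hτβ | hβτ
    · have hτ : τ i s ∈ Icc α β := ⟨(h.delay_mem i s hs').1, hτβ⟩
      rw [hx.1 hτ, hy.1 hτ, sub_self, norm_zero]
      have := sub_nonneg.2 hs'.1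
      positivity
    · refine (hxy _ ⟨hβτ, (h.delay_mem_Icc i hs').2⟩).trans ?_
      have := (h.delay_mem i s hs').2
      gcongr
  calc ‖f s (fun i => x (τ i s)) - f s (fun i => y (τ i s))‖
      ≤ L * ∑ i, ‖x (τ i s) - y (τ i s)‖ :=
        h.norm_sub_le s hs' _ _ (h.delay_mem_tube hx hs') (h.delay_mem_tube hy hs')
    _ ≤ L * ∑ _i : ι, (Fintype.card ι * L * (s - β)) ^ k / k.factorial * d :=
        mul_le_mul_of_nonneg_left (Finset.sum_le_sum fun i _ => hdelay i) h.nonneg_L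
    _ = (Fintype.card ι * L) ^ (k + 1) * (s - β) ^ k / k.factorial * d := by
        rw [Finset.sum_const, Finset.card_univ, nsmul_eq_mul, mul_pow]
        ring

lemma continuousOn_picard (h : IsPicardLindelof τ φ f α β ζ ε M L)
    (hx : ContinuousOn x (Icc α ζ)) : ContinuousOn (picard τ φ f β x) (Icc α ζ) := by
  have hprim : ContinuousOn (fun t => ∫ s in β..t, f s (fun i => x (τ i s))) (Icc β ζ) := by
    simpa only [uIcc_of_le h.le_right] using
      continuousOn_primitive_interval' (h.intervalIntegrable_comp hx (right_mem_Icc.2 h.le_right))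
        left_mem_uIcc
  exact (continuousOn_history_min h.continuousOn_history h.le_left).add
    (hprim.comp (continuous_id.max continuous_const).continuousOn
    fun t ht => ⟨le_max_right _ _, max_le ht.2 h.le_right⟩)

lemma hasDerivWithinAt_picard [CompleteSpace X] (h : IsPicardLindelof τ φ f α β ζ ε M L)
    (hx : ContinuousOn x (Icc α ζ)) {t : ℝ} (ht : t ∈ Icc β ζ) :
    HasDerivWithinAt (picard τ φ f β x) (f t (fun i => x (τ i t))) (Icc β ζ) t := by
  have : Fact (t ∈ Icc β ζ) := ⟨ht⟩
  have hFTC := integral_hasDerivWithinAt_right (h.intervalIntegrable_comp hx ht)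
    ((h.continuousOn_comp hx).stronglyMeasurableAtFilter_nhdsWithin measurableSet_Icc t)
    (h.continuousOn_comp hx t ht) (s := Icc β ζ)
  exact (hFTC.const_add (φ β)).congr (fun s hs => picard_of_ge hs.1) (picard_of_ge ht.1)

lemma hasDerivWithinAt_of_eqOn_picard [CompleteSpace X] (h : IsPicardLindelof τ φ f α β ζ ε M L)
    (hx : ContinuousOn x (Icc α ζ)) (hfix : EqOn (picard τ φ f β x) x (Icc α ζ)) {t : ℝ}
    (ht : t ∈ Icc β ζ) :
    HasDerivWithinAt x (f t (fun i => x (τ i t))) (Icc β ζ) t :=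
  (h.hasDerivWithinAt_picard hx ht).congr
    (fun _ hs => (hfix (Icc_subset_Icc_left h.le_left hs)).symm)
    (hfix (Icc_subset_Icc_left h.le_left ht)).symm

lemma picard_eqOn_of_hasDerivWithinAt [CompleteSpace X] (h : IsPicardLindelof τ φ f α β ζ ε M L)
    (hx : ContinuousOn x (Icc α ζ)) (hφ : EqOn x φ (Icc α β))
    (hderiv : ∀ t ∈ Icc β ζ, HasDerivWithinAt x (f t (fun i => x (τ i t))) (Icc β ζ) t) :
    EqOn (picard τ φ f β x) x (Icc α ζ) := by
  intro t ht
  rcases le_total t β with htβ | hβt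
  · rw [picard_of_le htβ, hφ ⟨ht.1, htβ⟩]
  rw [picard_of_ge hβt, ← hφ (right_mem_Icc.2 h.le_left),
    integral_eq_sub_of_hasDeriv_right_of_le hβt (hx.mono (Icc_subset_Icc h.le_left ht.2))
      (fun s hs => (hderiv s ⟨hs.1.le, hs.2.le.trans ht.2⟩).mono_of_mem_nhdsWithin
        (Icc_mem_nhdsGT_of_mem ⟨hs.1.le, hs.2.trans_le ht.2⟩))
      (h.intervalIntegrable_comp hx ⟨hβt, ht.2⟩), add_sub_cancel]

end IsPicardLindelof

def admissibleSet (φ : ℝ → X) (α β ζ ε : ℝ) [Fact (α ≤ ζ)] : Set C(Icc α ζ, X) :=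
  {x | Admissible φ α β ζ ε (IccExtendCM x)}

section FixedPoint

variable [Fact (α ≤ ζ)]

lemma isClosed_admissibleSet : IsClosed (admissibleSet φ α β ζ ε) := by
  have hev : ∀ t, Continuous fun x : C(Icc α ζ, X) => IccExtendCM x t :=
    fun t => (continuous_eval_const t).comp IccExtendCM.continuous
  simp only [admissibleSet, Admissible, EqOn, ofPred_and, ofPred_forall]
  exact (isClosed_iInter fun t => isClosed_iInter fun _ =>
      isClosed_eq (hev t) continuous_const).inter
    (isClosed_iInter fun t => isClosed_iInter fun _ =>
      isClosed_le ((hev t).sub continuous_const).norm continuous_const)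

lemma domRestrict_mem_admissibleSet (hαβ : α ≤ β) (hβζ : β ≤ ζ) (hxc : ContinuousOn x (Icc α ζ))
    (hx : Admissible φ α β ζ ε x) :
    (⟨(Icc α ζ).domRestrict x, hxc.domRestrict⟩ : C(Icc α ζ, X)) ∈ admissibleSet φ α β ζ ε :=
  hx.congr hαβ hβζ fun _ ht => by rw [IccExtendCM_of_mem ht]; rfl

variable [NormedSpace ℝ X] (h : IsPicardLindelof τ φ f α β ζ ε M L)

namespace IsPicardLindelof

noncomputable def picardCM (x : C(Icc α ζ, X)) : C(Icc α ζ, X) :=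
  ⟨(Icc α ζ).domRestrict (picard τ φ f β (IccExtendCM x)),
    (h.continuousOn_picard (IccExtendCM x).continuous.continuousOn).domRestrict⟩

lemma IccExtendCM_picardCM (x : C(Icc α ζ, X)) :
    EqOn (IccExtendCM (h.picardCM x)) (picard τ φ f β (IccExtendCM x)) (Icc α ζ) :=
  fun _ ht => IccExtendCM_of_mem ht

lemma mapsTo_picardCM :
    MapsTo h.picardCM (admissibleSet φ α β ζ ε) (admissibleSet φ α β ζ ε) :=
  fun x hx => (h.admissible_picard hx).congr h.le_left h.le_right (h.IccExtendCM_picardCM x).symm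

lemma norm_iterate_picardCM_sub_le {x y : C(Icc α ζ, X)} (hx : x ∈ admissibleSet φ α β ζ ε)
    (hy : y ∈ admissibleSet φ α β ζ ε) (k : ℕ) {t : ℝ} (ht : t ∈ Icc β ζ) :
    ‖IccExtendCM (h.picardCM^[k] x) t - IccExtendCM (h.picardCM^[k] y) t‖ ≤
      (Fintype.card ι * L * (t - β)) ^ k / k.factorial * dist x y := by
  induction k generalizing t with
  | zero =>
    have ht' := Icc_subset_Icc_left h.le_left ht
    simpa only [iterate_zero, id_eq, IccExtendCM_of_mem ht', pow_zero, Nat.factorial_zero,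
      Nat.cast_one, div_one, one_mul, ← dist_eq_norm] using dist_apply_le_dist _
  | succ k ih =>
    have ht' := Icc_subset_Icc_left h.le_left ht
    rw [iterate_succ_apply', iterate_succ_apply', h.IccExtendCM_picardCM _ ht',
      h.IccExtendCM_picardCM _ ht']
    exact h.norm_picard_sub_picard_le (h.mapsTo_picardCM.iterate k hx)
      (h.mapsTo_picardCM.iterate k hy) (map_continuous _).continuousOn
      (map_continuous _).continuousOn dist_nonneg (fun _ hr => ih hr) ht

lemma dist_iterate_picardCM_le {x y : C(Icc α ζ, X)} (hx : x ∈ admissibleSet φ α β ζ ε)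
    (hy : y ∈ admissibleSet φ α β ζ ε) (k : ℕ) :
    dist (h.picardCM^[k] x) (h.picardCM^[k] y) ≤
      (Fintype.card ι * L * (ζ - β)) ^ k / k.factorial * dist x y := by
  have hK := h.nonneg_card_mul
  have hζβ := sub_nonneg.2 h.le_right
  refine (dist_le (by positivity)).2 fun t => ?_
  have hext : ∀ z : C(Icc α ζ, X), z t = IccExtendCM z t := fun z => (IccExtendCM_of_mem t.2).symm
  rw [hext, hext, dist_eq_norm]
  rcases le_total (t : ℝ) β with htβ | hβt
  · have hφ := fun z (hz : z ∈ admissibleSet φ α β ζ ε) => hz.1 ⟨t.2.1, htβ⟩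
    rw [hφ _ (h.mapsTo_picardCM.iterate k hx), hφ _ (h.mapsTo_picardCM.iterate k hy), sub_self,
      norm_zero]
    positivity
  · refine (h.norm_iterate_picardCM_sub_le hx hy k ⟨hβt, t.2.2⟩).trans ?_
    have := t.2.2
    gcongr

lemma exists_isFixedPt_picardCM [CompleteSpace X] :
    ∃ x ∈ admissibleSet φ α β ζ ε, IsFixedPt h.picardCM x ∧
      ∀ y ∈ admissibleSet φ α β ζ ε, IsFixedPt h.picardCM y → y = x := by
  have : CompleteSpace (admissibleSet φ α β ζ ε) := isClosed_admissibleSet.completeSpace_coe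
  have : Nonempty (admissibleSet φ α β ζ ε) :=
    ⟨⟨_, domRestrict_mem_admissibleSet h.le_left h.le_right
      (continuousOn_history_min h.continuousOn_history h.le_left) (admissible_history h.nonneg_ε)⟩⟩
  set T := h.mapsTo_picardCM.restrict
  obtain ⟨k, hk⟩ := ((FloorSemiring.tendsto_pow_div_factorial_atTop
    (Fintype.card ι * L * (ζ - β))).eventually (gt_mem_nhds zero_lt_one)).exists
  have hK : 0 ≤ (Fintype.card ι * L * (ζ - β)) ^ k / k.factorial := by
    have := h.nonneg_card_mul
    have := sub_nonneg.2 h.le_right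
    positivity
  have hT : ContractingWith ⟨_, hK⟩ T^[k] := ⟨hk, LipschitzWith.of_dist_le_mul fun x y => by
    simp only [T, MapsTo.iterate_restrict, Subtype.dist_eq, MapsTo.val_restrict_apply]
    exact h.dist_iterate_picardCM_le x.2 y.2 k⟩
  refine ⟨_, (hT.fixedPoint T^[k]).2, congrArg Subtype.val hT.isFixedPt_fixedPoint_iterate,
    fun y hy hfix => congrArg Subtype.val
      (hT.fixedPoint_unique' (x := ⟨y, hy⟩) ?_ hT.fixedPoint_isFixedPt)⟩
  exact IsFixedPt.iterate (Subtype.ext hfix : IsFixedPt T ⟨y, hy⟩) k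

end IsPicardLindelof

end FixedPoint

namespace IsPicardLindelof

variable [NormedSpace ℝ X]

lemma existsUnique_eqOn_picard [CompleteSpace X] (h : IsPicardLindelof τ φ f α β ζ ε M L) :
    ∃ x : ℝ → X, (ContinuousOn x (Icc α ζ) ∧ Admissible φ α β ζ ε x ∧
        EqOn (picard τ φ f β x) x (Icc α ζ)) ∧
      ∀ y : ℝ → X, ContinuousOn y (Icc α ζ) → Admissible φ α β ζ ε y →
        EqOn (picard τ φ f β y) y (Icc α ζ) → EqOn y x (Icc α ζ) := by
  have : Fact (α ≤ ζ) := ⟨h.le_left.trans h.le_right⟩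
  obtain ⟨x, hx, hfix, huniq⟩ := h.exists_isFixedPt_picardCM
  refine ⟨IccExtendCM x, ⟨(map_continuous _).continuousOn, hx, fun t ht => ?_⟩,
    fun y hyc hy hfixy t ht => ?_⟩
  · rw [← h.IccExtendCM_picardCM x ht, hfix]
  set Y : C(Icc α ζ, X) := ⟨(Icc α ζ).domRestrict y, hyc.domRestrict⟩
  have hYy : EqOn (IccExtendCM Y) y (Icc α ζ) := fun s hs => IccExtendCM_of_mem hs
  have hYfix : IsFixedPt h.picardCM Y := by
    ext s
    exact (h.picard_congr hYy s.2).trans (hfixy s.2)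
  rw [← hYy ht, huniq Y (domRestrict_mem_admissibleSet h.le_left h.le_right hyc hy) hYfix]

end IsPicardLindelof

end DelayODE

theorem picard_lindelof_delay_general
    {X : Type*} [NormedAddCommGroup X] [NormedSpace ℝ X] [CompleteSpace X]
    {n : ℕ}
    {α β γ : ℝ} (hαβ : α ≤ β) (hβγ : β < γ)
    (τ : Fin n → ℝ → ℝ)
    (hτc : ∀ i, ContinuousOn (τ i) (Icc β γ))
    (hτ : ∀ i, ∀ t ∈ Icc β γ, α ≤ τ i t ∧ τ i t ≤ t)
    (φ : ℝ → X) (hφ : ContinuousOn φ (Icc α β))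
    {ε M L : ℝ} (hε : 0 < ε) (hM : 0 < M) (hL : 0 < L)
    (f : ℝ → (Fin n → X) → X)
    (hfc : ContinuousOn (fun p : ℝ × (Fin n → X) => f p.1 p.2)
      (Icc β γ ×ˢ (univ : Set (Fin n → X))))
    (hfb : ∀ t ∈ Icc β γ, ∀ u : Fin n → X,
      (∀ i, ∃ s ∈ Icc α β, ‖u i - φ s‖ ≤ ε) → ‖f t u‖ ≤ M)
    (hfl : ∀ t ∈ Icc β γ, ∀ u v : Fin n → X,
      (∀ i, ∃ s ∈ Icc α β, ‖u i - φ s‖ ≤ ε) →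
      (∀ i, ∃ s ∈ Icc α β, ‖v i - φ s‖ ≤ ε) →
      ‖f t u - f t v‖ ≤ L * ∑ i, ‖u i - v i‖)
    (δ ζ : ℝ) (hδ : δ = min (γ - β) (ε / M)) (hζ : ζ = β + δ) :
    ∃ x : ℝ → X,
      (ContinuousOn x (Icc α ζ) ∧
        (∀ t ∈ Icc α β, x t = φ t) ∧
        (∀ t ∈ Icc β ζ, ‖x t - φ β‖ ≤ ε) ∧
        (∀ t ∈ Icc β ζ,
          HasDerivWithinAt x (f t (fun i => x (τ i t))) (Icc β ζ) t)) ∧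
      ∀ y : ℝ → X,
        (ContinuousOn y (Icc α ζ) ∧
          (∀ t ∈ Icc α β, y t = φ t) ∧
          (∀ t ∈ Icc β ζ, ‖y t - φ β‖ ≤ ε) ∧
          (∀ t ∈ Icc β ζ,
            HasDerivWithinAt y (f t (fun i => y (τ i t))) (Icc β ζ) t)) →
        EqOn y x (Icc α ζ) := by
  have hδ0 : 0 ≤ δ := hδ ▸ le_min (by linarith) (div_pos hε hM).le
  have hβζγ : Icc β ζ ⊆ Icc β γ := Icc_subset_Icc_right (by linarith [min_le_left (γ - β) (ε / M)])
  have hMδ : M * (ζ - β) ≤ ε := by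
    rw [hζ, add_sub_cancel_left, hδ]
    exact (mul_le_mul_of_nonneg_left (min_le_right _ _) hM.le).trans_eq (mul_div_cancel₀ ε hM.ne')
  have h : DelayODE.IsPicardLindelof τ φ f α β ζ ε M L :=
    { le_left := hαβ
      le_right := by linarith
      continuousOn_delay := fun i => (hτc i).mono hβζγ
      delay_mem := fun i t ht => hτ i t (hβζγ ht)
      continuousOn_history := hφ
      continuousOn_uncurry := hfc.mono (prod_mono hβζγ subset_rfl)
      norm_le := fun t ht => hfb t (hβζγ ht)
      norm_sub_le := fun t ht => hfl t (hβζγ ht)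
      nonneg_M := hM.le
      nonneg_L := hL.le
      mul_le := hMδ }
  obtain ⟨x, ⟨hxc, hx, hfix⟩, huniq⟩ := h.existsUnique_eqOn_picard
  exact ⟨x, ⟨hxc, hx.1, hx.2, fun t ht => h.hasDerivWithinAt_of_eqOn_picard hxc hfix ht⟩,
    fun y ⟨hyc, hyφ, hyε, hyd⟩ =>
      huniq y hyc ⟨hyφ, hyε⟩ (h.picard_eqOn_of_hasDerivWithinAt hyc hyφ hyd)⟩

/-- Picard–Lindelöf theorem for a system of delay differential equations
(continuous-time instance of the paper's nonlinear delay dynamic equation). -/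
theorem picard_lindelof_delay
    {X : Type*} [NormedAddCommGroup X] [NormedSpace ℝ X] [CompleteSpace X]
    {n : ℕ} (hn : 0 < n)
    {α β γ : ℝ} (hαβ : α ≤ β) (hβγ : β < γ)
    (τ : Fin n → ℝ → ℝ)
    (hτc : ∀ i, ContinuousOn (τ i) (Icc β γ))
    (hτ : ∀ i, ∀ t ∈ Icc β γ, α ≤ τ i t ∧ τ i t ≤ t)
    (φ : ℝ → X) (hφ : ContinuousOn φ (Icc α β))
    {ε M L : ℝ} (hε : 0 < ε) (hM : 0 < M) (hL : 0 < L)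
    (f : ℝ → (Fin n → X) → X)
    (hfc : ContinuousOn (fun p : ℝ × (Fin n → X) => f p.1 p.2)
      (Icc β γ ×ˢ (univ : Set (Fin n → X))))
    (hfb : ∀ t ∈ Icc β γ, ∀ u : Fin n → X,
      (∀ i, ∃ s ∈ Icc α β, ‖u i - φ s‖ ≤ ε) → ‖f t u‖ ≤ M)
    (hfl : ∀ t ∈ Icc β γ, ∀ u v : Fin n → X,
      (∀ i, ∃ s ∈ Icc α β, ‖u i - φ s‖ ≤ ε) →
      (∀ i, ∃ s ∈ Icc α β, ‖v i - φ s‖ ≤ ε) →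
      ‖f t u - f t v‖ ≤ L * ∑ i, ‖u i - v i‖)
    (δ ζ : ℝ) (hδ : δ = min (γ - β) (ε / M)) (hζ : ζ = β + δ) :
    ∃ x : ℝ → X,
      (ContinuousOn x (Icc α ζ) ∧
        (∀ t ∈ Icc α β, x t = φ t) ∧
        (∀ t ∈ Icc β ζ, ‖x t - φ β‖ ≤ ε) ∧
        (∀ t ∈ Icc β ζ,
          HasDerivWithinAt x (f t (fun i => x (τ i t))) (Icc β ζ) t)) ∧
      ∀ y : ℝ → X,
        (ContinuousOn y (Icc α ζ) ∧
          (∀ t ∈ Icc α β, y t = φ t) ∧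
          (∀ t ∈ Icc β ζ, ‖y t - φ β‖ ≤ ε) ∧
          (∀ t ∈ Icc β ζ,
            HasDerivWithinAt y (f t (fun i => y (τ i t))) (Icc β ζ) t)) →
        EqOn y x (Icc α ζ) :=
  picard_lindelof_delay_general hαβ hβγ τ hτc hτ φ hφ hε hM hL f hfc hfb hfl δ ζ hδ hζ
end

section
/- For every k ∈ ℕ and every t ∈ [β,ζ], the Picard iterates satisfy the uniform bound ‖x_k(t)‖ ≤ ‖φ(β)‖ + (M/L)·(e^{L(t−β)} − 1); in particular all iterates are uniformly bounded on [β,ζ] by ‖φ(β)‖ + (M/L)·(e^{L(ζ−β)} − 1). -/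
open Set

/-- Majorant-series uniform bound on the Picard iterates from the proof of the
Picard–Lindelöf theorem (continuous-time case, `e_L(t,β) = exp (L(t-β))`). -/

theorem picard_iterates_uniform_bound
    {X : Type*} [NormedAddCommGroup X] [NormedSpace ℝ X] [CompleteSpace X]
    {n : ℕ} (hn : 0 < n)
    {α β γ : ℝ} (hαβ : α ≤ β) (hβγ : β < γ)
    (τ : Fin n → ℝ → ℝ)
    (hτc : ∀ i, ContinuousOn (τ i) (Icc β γ))
    (hτ : ∀ i, ∀ t ∈ Icc β γ, α ≤ τ i t ∧ τ i t ≤ t)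
    (φ : ℝ → X) (hφ : ContinuousOn φ (Icc α β))
    {ε M L : ℝ} (hε : 0 < ε) (hM : 0 < M) (hL : 0 < L)
    (f : ℝ → (Fin n → X) → X)
    (hfc : ContinuousOn (fun p : ℝ × (Fin n → X) => f p.1 p.2)
      (Icc β γ ×ˢ (univ : Set (Fin n → X))))
    (hfb : ∀ t ∈ Icc β γ, ∀ u : Fin n → X,
      (∀ i, ∃ s ∈ Icc α β, ‖u i - φ s‖ ≤ ε) → ‖f t u‖ ≤ M)
    (hfl : ∀ t ∈ Icc β γ, ∀ u v : Fin n → X,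
      (∀ i, ∃ s ∈ Icc α β, ‖u i - φ s‖ ≤ ε) →
      (∀ i, ∃ s ∈ Icc α β, ‖v i - φ s‖ ≤ ε) →
      ‖f t u - f t v‖ ≤ L * ∑ i, ‖u i - v i‖)
    (δ ζ : ℝ) (hδ : δ = min (γ - β) (ε / M)) (hζ : ζ = β + δ)
    (x : ℕ → ℝ → X)
    (hx0a : ∀ t ∈ Icc α β, x 0 t = φ t)
    (hx0b : ∀ t ∈ Icc β ζ, x 0 t = φ β)
    (hxka : ∀ k : ℕ, ∀ t ∈ Icc α β, x (k + 1) t = φ t)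
    (hxkb : ∀ k : ℕ, ∀ t ∈ Icc β ζ,
      x (k + 1) t = φ β + ∫ s in β..t, f s (fun i => x k (τ i s))) :
    (∀ k : ℕ, ∀ t ∈ Icc β ζ,
        ‖x k t‖ ≤ ‖φ β‖ + (M / L) * (Real.exp (L * (t - β)) - 1)) ∧
      (∀ k : ℕ, ∀ t ∈ Icc β ζ,
        ‖x k t‖ ≤ ‖φ β‖ + (M / L) * (Real.exp (L * (ζ - β)) - 1)) := by
  have hδ1 : δ ≤ γ - β := hδ ▸ min_le_left _ _
  have hδ2 : δ ≤ ε / M := hδ ▸ min_le_right _ _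
  have hζγ : ζ ≤ γ := by rw [hζ]; linarith
  have hMδ : M * δ ≤ ε := by
    have := (le_div_iff₀ hM).mp hδ2
    linarith
  have key : ∀ k, ∀ t ∈ Icc β ζ, ‖x k t - φ β‖ ≤ M * (t - β) := by
    intro k
    induction k with
    | zero =>
      intro t ht
      rw [hx0b t ht, sub_self, norm_zero]
      have := ht.1; nlinarith [hM.le]
    | succ k ih =>
      intro t ht
      rw [hxkb k t ht, add_sub_cancel_left]
      have htβ : β ≤ t := ht.1
      have h2 : ∀ s ∈ Set.uIoc β t, ‖f s (fun i => x k (τ i s))‖ ≤ M := by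
        intro s hs
        rw [Set.uIoc_of_le htβ] at hs
        have hsβ : β < s := hs.1
        have hst : s ≤ t := hs.2
        have hsγ : s ∈ Icc β γ := ⟨hsβ.le, hst.trans (ht.2.trans hζγ)⟩
        apply hfb s hsγ
        intro i
        obtain ⟨hτ1, hτ2⟩ := hτ i s hsγ
        by_cases hc : τ i s ≤ β
        · refine ⟨τ i s, ⟨hτ1, hc⟩, ?_⟩
          have hx : x k (τ i s) = φ (τ i s) := by
            cases k with
            | zero => exact hx0a _ ⟨hτ1, hc⟩
            | succ m => exact hxka m _ ⟨hτ1, hc⟩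
          rw [hx, sub_self, norm_zero]; exact hε.le
        · push_neg at hc
          refine ⟨β, ⟨hαβ, le_refl β⟩, ?_⟩
          have hmem : τ i s ∈ Icc β ζ := ⟨hc.le, (hτ2.trans hst).trans ht.2⟩
          have hih := ih (τ i s) hmem
          have h3 : M * (τ i s - β) ≤ M * δ := by
            have h4 : τ i s - β ≤ δ := by
              have := hmem.2; rw [hζ] at this; linarith
            nlinarith [hM.le]
          linarith [hMδ]
      have hni := intervalIntegral.norm_integral_le_of_norm_le_const h2
      rwa [abs_of_nonneg (by linarith)] at hni
  have part1 : ∀ k, ∀ t ∈ Icc β ζ,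
      ‖x k t‖ ≤ ‖φ β‖ + (M / L) * (Real.exp (L * (t - β)) - 1) := by
    intro k t ht
    have h1 := key k t ht
    have h2 : ‖x k t‖ - ‖φ β‖ ≤ ‖x k t - φ β‖ := norm_sub_norm_le _ _
    have h3 : M * (t - β) ≤ M / L * (Real.exp (L * (t - β)) - 1) := by
      have he : L * (t - β) + 1 ≤ Real.exp (L * (t - β)) := Real.add_one_le_exp _
      rw [div_mul_eq_mul_div, le_div_iff₀ hL]
      nlinarith [hM.le]
    linarith
  refine ⟨part1, fun k t ht => ?_⟩
  have h1 := part1 k t ht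
  have hmono : Real.exp (L * (t - β)) ≤ Real.exp (L * (ζ - β)) := by
    apply Real.exp_le_exp.mpr
    have := ht.2
    nlinarith [hL.le]
  have hML : 0 ≤ M / L := le_of_lt (div_pos hM hL)
  nlinarith
end

section
/- Let L > 0 and let f : [β,γ] × Xⁿ → X satisfy ‖f(t,u₁,…,uₙ) − f(t,v₁,…,vₙ)‖ ≤ L·Σ_{i=1}^{n} ‖u_i − v_i‖ for all t ∈ [β,γ] and all u₁,…,uₙ,v₁,…,vₙ ∈ X. If x, y : [α,γ] → X are both continuous, satisfy x(t) = y(t) = φ(t) for all t ∈ [α,β], and are both differentiable on [β,γ] with x′(t) = f(t, x(τ₁(t)), …, x(τₙ(t))) and y′(t) = f(t, y(τ₁(t)), …, y(τₙ(t))) for all t ∈ [β,γ], then x(t) = y(t) for all t ∈ [α,γ]. -/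
open Set

/-- Uniqueness part of the Picard–Lindelöf theorem for delay differential
systems, proved in the paper via the Grönwall inequality. -/
theorem delay_ivp_uniqueness
    {X : Type*} [NormedAddCommGroup X] [NormedSpace ℝ X] [CompleteSpace X]
    {n : ℕ} (hn : 0 < n)
    {α β γ : ℝ} (hαβ : α ≤ β) (hβγ : β < γ)
    (τ : Fin n → ℝ → ℝ)
    (hτc : ∀ i, ContinuousOn (τ i) (Icc β γ))
    (hτ : ∀ i, ∀ t ∈ Icc β γ, α ≤ τ i t ∧ τ i t ≤ t)
    (φ : ℝ → X) (hφ : ContinuousOn φ (Icc α β))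
    {L : ℝ} (hL : 0 < L)
    (f : ℝ → (Fin n → X) → X)
    (hfl : ∀ t ∈ Icc β γ, ∀ u v : Fin n → X,
      ‖f t u - f t v‖ ≤ L * ∑ i, ‖u i - v i‖)
    (x y : ℝ → X)
    (hxc : ContinuousOn x (Icc α γ)) (hyc : ContinuousOn y (Icc α γ))
    (hxφ : ∀ t ∈ Icc α β, x t = φ t) (hyφ : ∀ t ∈ Icc α β, y t = φ t)
    (hx : ∀ t ∈ Icc β γ,
      HasDerivWithinAt x (f t (fun i => x (τ i t))) (Icc β γ) t)
    (hy : ∀ t ∈ Icc β γ,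
      HasDerivWithinAt y (f t (fun i => y (τ i t))) (Icc β γ) t) :
    ∀ t ∈ Icc α γ, x t = y t := by
  -- the projection of ℝ onto [β,γ]
  set π : ℝ → ℝ := fun s => ((Set.projIcc β γ hβγ.le s : Set.Icc β γ) : ℝ) with hπdef
  have hπc : Continuous π := continuous_subtype_val.comp (continuous_projIcc)
  have hπmem : ∀ s, π s ∈ Icc β γ := fun s => (Set.projIcc β γ hβγ.le s).2
  have hπid : ∀ s ∈ Icc β γ, π s = s := by
    intro s hs
    simp [hπdef, Set.projIcc_of_mem hβγ.le hs]
  -- the (globally continuous) bound on the derivative of x - y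
  set ρ : ℝ → ℝ := fun s => L * ∑ i, ‖x (τ i (π s)) - y (τ i (π s))‖ with hρdef
  have hτmaps : ∀ i, MapsTo (τ i) (Icc β γ) (Icc α γ) := by
    intro i s hs
    exact ⟨(hτ i s hs).1, le_trans (hτ i s hs).2 hs.2⟩
  have hρc : Continuous ρ := by
    apply continuous_const.mul
    apply continuous_finset_sum
    intro i _
    have h1 : ContinuousOn (fun s => x (τ i s) - y (τ i s)) (Icc β γ) :=
      (hxc.comp (hτc i) (hτmaps i)).sub (hyc.comp (hτc i) (hτmaps i))
    exact (h1.comp_continuous hπc hπmem).norm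
  have hρ0 : ∀ s, 0 ≤ ρ s := fun s =>
    mul_nonneg hL.le (Finset.sum_nonneg fun i _ => norm_nonneg _)
  -- the integral of ρ
  set w : ℝ → ℝ := fun t => ∫ s in β..t, ρ s with hwdef
  have hw : ∀ t, HasDerivAt w (ρ t) t := by
    intro t
    exact intervalIntegral.integral_hasDerivAt_right
      (hρc.intervalIntegrable _ _)
      hρc.stronglyMeasurable.stronglyMeasurableAtFilter
      hρc.continuousAt
  have hwmono : ∀ ⦃s t : ℝ⦄, s ≤ t → w s ≤ w t := by
    intro s t hst
    have h1 : w t - w s = ∫ u in s..t, ρ u :=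
      intervalIntegral.integral_interval_sub_left
        (hρc.intervalIntegrable _ _) (hρc.intervalIntegrable _ _)
    have h2 : 0 ≤ ∫ u in s..t, ρ u :=
      intervalIntegral.integral_nonneg hst (fun u _ => hρ0 u)
    linarith
  have hwβ : w β = 0 := by simp [hwdef]
  have hw0 : ∀ t, β ≤ t → 0 ≤ w t := fun t ht => hwβ ▸ hwmono ht
  -- the difference and its vanishing on [α, β]
  have hd0 : ∀ t ∈ Icc α β, x t - y t = 0 := by
    intro t ht
    rw [hxφ t ht, hyφ t ht, sub_self]
  -- fencing: ‖x t - y t‖ ≤ w t on [β, γ]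
  have hdle : ∀ t ∈ Icc β γ, ‖x t - y t‖ ≤ w t := by
    have := image_norm_le_of_norm_deriv_right_le_deriv_boundary
      (f := fun t => x t - y t)
      (f' := fun t => f t (fun i => x (τ i t)) - f t (fun i => y (τ i t)))
      (a := β) (b := γ)
      (((hxc.mono (Icc_subset_Icc hαβ le_rfl)).sub
        (hyc.mono (Icc_subset_Icc hαβ le_rfl))))
      (by
        intro t ht
        exact ((hx t (Ico_subset_Icc_self ht)).sub (hy t (Ico_subset_Icc_self ht))).mono_of_mem_nhdsWithin
          (Icc_mem_nhdsGE_of_mem ht))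
      (by
        have h := hd0 β ⟨hαβ, le_rfl⟩
        simp only [h, norm_zero, hwβ, le_refl])
      (fun t => hw t)
      (by
        intro t ht
        have h1 := hfl t (Ico_subset_Icc_self ht) (fun i => x (τ i t)) (fun i => y (τ i t))
        have h2 : ρ t = L * ∑ i, ‖x (τ i t) - y (τ i t)‖ := by
          rw [hρdef]
          simp only [hπid t (Ico_subset_Icc_self ht)]
        rw [h2]
        exact h1)
    exact fun t ht => this ht
  -- Grönwall for w
  have hwle : ∀ t ∈ Icc β γ, w t ≤ 0 := by
    have hg := norm_le_gronwallBound_of_norm_deriv_right_le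
      (f := w) (f' := ρ) (δ := 0) (K := L * n) (ε := 0) (a := β) (b := γ)
      (fun t _ => (hw t).continuousAt.continuousWithinAt)
      (fun t _ => (hw t).hasDerivWithinAt)
      (by rw [hwβ, norm_zero])
      (by
        intro t ht
        have htm := Ico_subset_Icc_self ht
        have hbound : ∀ i : Fin n, ‖x (τ i t) - y (τ i t)‖ ≤ w t := by
          intro i
          rcases le_or_gt (τ i t) β with h | h
          · rw [hd0 (τ i t) ⟨(hτ i t htm).1, h⟩, norm_zero]
            exact hw0 t ht.1
          · exact le_trans (hdle (τ i t) ⟨h.le, le_trans (hτ i t htm).2 htm.2⟩)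
              (hwmono (hτ i t htm).2)
        have h1 : ρ t ≤ L * (n * w t) := by
          have h2 : ρ t = L * ∑ i, ‖x (τ i t) - y (τ i t)‖ := by
            rw [hρdef]; simp only [hπid t htm]
          rw [h2]
          refine mul_le_mul_of_nonneg_left ?_ hL.le
          calc ∑ i, ‖x (τ i t) - y (τ i t)‖ ≤ ∑ _i : Fin n, w t :=
                Finset.sum_le_sum fun i _ => hbound i
            _ = n * w t := by simp [mul_comm]
        rw [Real.norm_of_nonneg (hρ0 t), Real.norm_of_nonneg (hw0 t ht.1)]
        linarith [h1]
        )
    intro t ht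
    have := hg t ht
    rwa [gronwallBound_ε0, zero_mul, Real.norm_of_nonneg (hw0 t ht.1)] at this
  -- conclusion
  intro t ht
  rcases le_or_gt t β with h | h
  · rw [hxφ t ⟨ht.1, h⟩, hyφ t ⟨ht.1, h⟩]
  · have h1 : ‖x t - y t‖ ≤ 0 := le_trans (hdle t ⟨h.le, ht.2⟩) (hwle t ⟨h.le, ht.2⟩)
    have h2 : x t - y t = 0 := by
      have := norm_nonneg (x t - y t)
      have : ‖x t - y t‖ = 0 := le_antisymm h1 this
      exact norm_eq_zero.mp this
    exact sub_eq_zero.mp h2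
end

section
/- Let p_1, …, p_n : [β,γ] → B(X) and q : [β,γ] → X be continuous. Then there exists exactly one function x : [α,γ] → X such that x is continuous on [α,γ], x(t) = φ(t) for all t ∈ [α,β], and x is differentiable on [β,γ] with x′(t) = Σ_{i=1}^{n} p_i(t) x(τ_i(t)) + q(t) for all t ∈ [β,γ]. -/
open Set MeasureTheory intervalIntegral Filter Topology

set_option maxHeartbeats 1000000 in
/-- Global existence and uniqueness for linear delay differential equations on
the entire interval `[α, γ]` (continuous-time case of the paper's theorem). -/
theorem linear_delay_global_existence_uniqueness
    {X : Type*} [NormedAddCommGroup X] [NormedSpace ℝ X] [CompleteSpace X]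
    {n : ℕ} (hn : 0 < n)
    {α β γ : ℝ} (hαβ : α ≤ β) (hβγ : β < γ)
    (τ : Fin n → ℝ → ℝ)
    (hτc : ∀ i, ContinuousOn (τ i) (Icc β γ))
    (hτ : ∀ i, ∀ t ∈ Icc β γ, α ≤ τ i t ∧ τ i t ≤ t)
    (φ : ℝ → X) (hφ : ContinuousOn φ (Icc α β))
    (p : Fin n → ℝ → X →L[ℝ] X) (hp : ∀ i, ContinuousOn (p i) (Icc β γ))
    (q : ℝ → X) (hq : ContinuousOn q (Icc β γ)) :
    ∃ x : ℝ → X,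
      (ContinuousOn x (Icc α γ) ∧
        (∀ t ∈ Icc α β, x t = φ t) ∧
        (∀ t ∈ Icc β γ,
          HasDerivWithinAt x (∑ i, p i t (x (τ i t)) + q t) (Icc β γ) t)) ∧
      ∀ y : ℝ → X,
        (ContinuousOn y (Icc α γ) ∧
          (∀ t ∈ Icc α β, y t = φ t) ∧
          (∀ t ∈ Icc β γ,
            HasDerivWithinAt y (∑ i, p i t (y (τ i t)) + q t) (Icc β γ) t)) →
        EqOn y x (Icc α γ) := by
  have hαγ : α ≤ γ := hαβ.trans hβγ.le
  have hβmem : β ∈ Icc β γ := left_mem_Icc.2 hβγ.le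
  -- the projection onto `Icc α γ`
  set π : ℝ → ↥(Icc α γ) := fun t => projIcc α γ hαγ t with hπdef
  have hπval : ∀ {r : ℝ} (hr : r ∈ Icc α γ), π r = ⟨r, hr⟩ := by
    intro r hr; simp only [hπdef]; exact projIcc_of_mem hαγ hr
  have hτI : ∀ (i : Fin n), ∀ s ∈ Icc β γ, τ i s ∈ Icc α γ := fun i s hs =>
    ⟨(hτ i s hs).1, ((hτ i s hs).2.trans hs.2)⟩
  -- the right-hand side functional
  set F : ℝ → C(↥(Icc α γ), X) → X :=
    fun s u => ∑ i, p i s (u (π (τ i s))) + q s with hFdef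
  have hFc : ∀ u : C(↥(Icc α γ), X), ContinuousOn (fun s => F s u) (Icc β γ) := by
    intro u
    apply ContinuousOn.add _ hq
    apply continuousOn_finset_sum
    intro i _
    apply (hp i).clm_apply
    exact (u.continuous.comp continuous_projIcc).comp_continuousOn (hτc i)
  have hFint : ∀ (u : C(↥(Icc α γ), X)) {c d : ℝ}, c ∈ Icc β γ → d ∈ Icc β γ →
      IntervalIntegrable (fun s => F s u) volume c d := by
    intro u c d hc hd
    exact ((hFc u).mono (uIcc_subset_Icc hc hd)).intervalIntegrable
  -- the Picard operator
  have hTmem1 : ∀ t : ↥(Icc α γ), min (t : ℝ) β ∈ Icc α β :=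
    fun t => ⟨le_min t.2.1 hαβ, min_le_right _ _⟩
  have hTmem2 : ∀ t : ↥(Icc α γ), max (t : ℝ) β ∈ Icc β γ :=
    fun t => ⟨le_max_right _ _, max_le t.2.2 hβγ.le⟩
  have hTcont : ∀ u : C(↥(Icc α γ), X), Continuous fun t : ↥(Icc α γ) =>
      φ (min (t : ℝ) β) + ∫ s in β..(max (t : ℝ) β), F s u := by
    intro u
    apply Continuous.add
    · exact hφ.comp_continuous (continuous_subtype_val.min continuous_const) hTmem1
    · have hprim : ContinuousOn (fun r => ∫ s in β..r, F s u) (Icc β γ) := by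
        have := intervalIntegral.continuousOn_primitive_interval'
          (μ := volume) (f := fun s => F s u) (b₁ := β) (b₂ := γ)
          (hFint u hβmem (right_mem_Icc.2 hβγ.le)) left_mem_uIcc
        rwa [uIcc_of_le hβγ.le] at this
      exact hprim.comp_continuous (continuous_subtype_val.max continuous_const) hTmem2
  set T : C(↥(Icc α γ), X) → C(↥(Icc α γ), X) :=
    fun u => ⟨fun t => φ (min (t : ℝ) β) + ∫ s in β..(max (t : ℝ) β), F s u, hTcont u⟩
    with hTdef
  have hTle : ∀ (u : C(↥(Icc α γ), X)) (t : ↥(Icc α γ)), (t : ℝ) ≤ β → T u t = φ (t : ℝ) := by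
    intro u t h
    simp only [hTdef, ContinuousMap.coe_mk, min_eq_left h, max_eq_right h,
      intervalIntegral.integral_same, add_zero]
  have hTge : ∀ (u : C(↥(Icc α γ), X)) (t : ↥(Icc α γ)), β ≤ (t : ℝ) →
      T u t = φ β + ∫ s in β..(t : ℝ), F s u := by
    intro u t h
    simp only [hTdef, ContinuousMap.coe_mk, min_eq_right h, max_eq_left h]
  -- a bound on the operator norms
  obtain ⟨M₀, hM₀⟩ := (isCompact_Icc : IsCompact (Icc β γ)).exists_bound_of_continuousOn
    (f := fun s => ∑ i, ‖p i s‖)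
    (continuousOn_finset_sum _ fun i _ => (hp i).norm)
  set M : ℝ := max M₀ 0 with hMdef
  have hM0 : 0 ≤ M := le_max_right _ _
  have hM : ∀ s ∈ Icc β γ, ∑ i, ‖p i s‖ ≤ M := by
    intro s hs
    calc ∑ i, ‖p i s‖ ≤ ‖∑ i, ‖p i s‖‖ := le_abs_self _
      _ ≤ M₀ := hM₀ s hs
      _ ≤ M := le_max_left _ _
  -- the key iterated estimate
  have key : ∀ (k : ℕ) (u v : C(↥(Icc α γ), X)) (t : ↥(Icc α γ)),
      dist (T^[k] u t) (T^[k] v t)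
        ≤ M ^ k * max ((t : ℝ) - β) 0 ^ k / k.factorial * dist u v := by
    intro k
    induction k with
    | zero =>
      intro u v t
      simpa using ContinuousMap.dist_apply_le_dist (f := u) (g := v) t
    | succ k ih =>
      intro u v t
      rw [Function.iterate_succ_apply', Function.iterate_succ_apply']
      set a := T^[k] u with ha
      set b := T^[k] v with hb
      rcases le_or_gt (t : ℝ) β with hle | hlt
      · rw [hTle a t hle, hTle b t hle, dist_self]
        positivity
      · have htβγ : (t : ℝ) ∈ Icc β γ := ⟨hlt.le, t.2.2⟩
        have hia : IntervalIntegrable (fun s => F s a) volume β (t : ℝ) := hFint a hβmem htβγ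
        have hib : IntervalIntegrable (fun s => F s b) volume β (t : ℝ) := hFint b hβmem htβγ
        rw [hTge a t hlt.le, hTge b t hlt.le, dist_eq_norm, add_sub_add_left_eq_sub,
          ← intervalIntegral.integral_sub hia hib]
        -- pointwise bound of the integrand
        have hptwise : ∀ s ∈ Icc β γ, ‖F s a - F s b‖
            ≤ M * (M ^ k * (s - β) ^ k / k.factorial * dist u v) := by
          intro s hs
          have h1 : F s a - F s b = ∑ i, p i s (a (π (τ i s)) - b (π (τ i s))) := by
            simp only [hFdef, add_sub_add_right_eq_sub, ← Finset.sum_sub_distrib, map_sub]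
          have hsmax : max (s - β) 0 = s - β := max_eq_left (sub_nonneg.2 hs.1)
          have hterm : ∀ i : Fin n, ‖p i s (a (π (τ i s)) - b (π (τ i s)))‖
              ≤ ‖p i s‖ * (M ^ k * (s - β) ^ k / k.factorial * dist u v) := by
            intro i
            refine (ContinuousLinearMap.le_opNorm _ _).trans ?_
            refine mul_le_mul_of_nonneg_left ?_ (norm_nonneg _)
            rw [← dist_eq_norm]
            refine (ih u v (π (τ i s))).trans ?_
            have hcoe : ((π (τ i s) : ↥(Icc α γ)) : ℝ) = τ i s := by
              rw [hπval (hτI i s hs)]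
            rw [hcoe, ← hsmax]
            gcongr
            exact (hτ i s hs).2
          calc ‖F s a - F s b‖ = ‖∑ i, p i s (a (π (τ i s)) - b (π (τ i s)))‖ := by rw [h1]
            _ ≤ ∑ i, ‖p i s (a (π (τ i s)) - b (π (τ i s)))‖ := norm_sum_le _ _
            _ ≤ ∑ i, ‖p i s‖ * (M ^ k * (s - β) ^ k / k.factorial * dist u v) :=
                Finset.sum_le_sum fun i _ => hterm i
            _ = (∑ i, ‖p i s‖) * (M ^ k * (s - β) ^ k / k.factorial * dist u v) :=
                (Finset.sum_mul _ _ _).symm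
            _ ≤ M * (M ^ k * (s - β) ^ k / k.factorial * dist u v) := by
                refine mul_le_mul_of_nonneg_right (hM s hs) ?_
                have : 0 ≤ s - β := sub_nonneg.2 hs.1
                positivity
        have hgint : IntervalIntegrable
            (fun s => M * (M ^ k * (s - β) ^ k / k.factorial * dist u v)) volume β (t : ℝ) := by
          apply Continuous.intervalIntegrable
          fun_prop
        have hnormle : ‖∫ s in β..(t : ℝ), (F s a - F s b)‖
            ≤ ∫ s in β..(t : ℝ), M * (M ^ k * (s - β) ^ k / k.factorial * dist u v) := by
          refine (intervalIntegral.norm_integral_le_integral_norm hlt.le).trans ?_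
          apply intervalIntegral.integral_mono_on hlt.le (hia.sub hib).norm hgint
          intro s hs
          exact hptwise s ⟨hs.1, hs.2.trans t.2.2⟩
        refine hnormle.trans ?_
        have hInt : ∫ s in β..(t : ℝ), M * (M ^ k * (s - β) ^ k / k.factorial * dist u v)
            = M ^ (k + 1) * ((t : ℝ) - β) ^ (k + 1) / (k + 1).factorial * dist u v := by
          have hrw : ∀ s : ℝ, M * (M ^ k * (s - β) ^ k / k.factorial * dist u v)
              = (M ^ (k + 1) / k.factorial * dist u v) * ((fun x => x ^ k) (s - β)) := by
            intro s; simp only []; ring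
          simp only [hrw]
          rw [intervalIntegral.integral_const_mul,
            intervalIntegral.integral_comp_sub_right (fun x => x ^ k) β, sub_self, integral_pow]
          have hk1 : ((k + 1).factorial : ℝ) = (k + 1) * k.factorial := by
            rw [Nat.factorial_succ]; push_cast; ring
          have hkfac : (k.factorial : ℝ) ≠ 0 := Nat.cast_ne_zero.2 k.factorial_ne_zero
          have hk1ne : ((k : ℝ) + 1) ≠ 0 := by positivity
          rw [hk1]
          field_simp
          ring
        rw [hInt, max_eq_left (sub_nonneg.2 hlt.le)]
  -- distance estimate for the iterates
  have hdist : ∀ (k : ℕ) (u v : C(↥(Icc α γ), X)),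
      dist (T^[k] u) (T^[k] v) ≤ M ^ k * (γ - β) ^ k / k.factorial * dist u v := by
    intro k u v
    have hγβ : (0:ℝ) ≤ γ - β := sub_nonneg.2 hβγ.le
    rw [ContinuousMap.dist_le (by positivity)]
    intro t
    refine (key k u v t).trans ?_
    gcongr
    exact max_le (sub_le_sub_right t.2.2 β) hγβ
  -- choose a contracting iterate
  obtain ⟨k, hk⟩ : ∃ k : ℕ, M ^ k * (γ - β) ^ k / k.factorial < 1 := by
    have h := FloorSemiring.tendsto_pow_div_factorial_atTop (K := ℝ) (M * (γ - β))
    have h2 := h.eventually (gt_mem_nhds one_pos)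
    obtain ⟨k, hk⟩ := h2.exists
    exact ⟨k, by rwa [mul_pow] at hk⟩
  haveI : Nonempty C(↥(Icc α γ), X) := ⟨ContinuousMap.const _ 0⟩
  set L : ℝ := M ^ k * (γ - β) ^ k / k.factorial with hLdef
  have hL0 : 0 ≤ L := by
    have hγβ : (0:ℝ) ≤ γ - β := sub_nonneg.2 hβγ.le
    positivity
  have hcontr : ContractingWith L.toNNReal (T^[k]) := by
    constructor
    · rwa [← NNReal.coe_lt_one, Real.coe_toNNReal _ hL0]
    · apply LipschitzWith.of_dist_le_mul
      intro u v
      rw [Real.coe_toNNReal _ hL0]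
      exact hdist k u v
  set z : C(↥(Icc α γ), X) := ContractingWith.fixedPoint (T^[k]) hcontr with hzdef
  have hzfix : Function.IsFixedPt T z := hcontr.isFixedPt_fixedPoint_iterate
  -- the solution
  set x : ℝ → X := fun t => z (π t) with hxdef
  have hxc : ContinuousOn x (Icc α γ) :=
    (z.continuous.comp continuous_projIcc).continuousOn
  have hxφ : ∀ t ∈ Icc α β, x t = φ t := by
    intro t ht
    have htI : t ∈ Icc α γ := ⟨ht.1, ht.2.trans hβγ.le⟩
    have : x t = T z (π t) := by rw [hxdef]; simp only []; rw [hzfix]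
    rw [this, hπval htI, hTle z ⟨t, htI⟩ ht.2]
  have hxeq : ∀ r ∈ Icc β γ, x r = φ β + ∫ s in β..r, F s z := by
    intro r hr
    have hrI : r ∈ Icc α γ := ⟨hαβ.trans hr.1, hr.2⟩
    have h1 : x r = T z (π r) := by rw [hxdef]; simp only []; rw [hzfix]
    rw [h1, hπval hrI, hTge z ⟨r, hrI⟩ hr.1]
  have hxderiv : ∀ t ∈ Icc β γ,
      HasDerivWithinAt x (∑ i, p i t (x (τ i t)) + q t) (Icc β γ) t := by
    intro t ht
    haveI : Fact (t ∈ Icc β γ) := ⟨ht⟩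
    have hmeas : StronglyMeasurableAtFilter (fun s => F s z) (𝓝[Icc β γ] t) volume :=
      ⟨Icc β γ, self_mem_nhdsWithin, ((hFc z).mono Subset.rfl).aestronglyMeasurable measurableSet_Icc⟩
    have hprim : HasDerivWithinAt (fun r => ∫ s in β..r, F s z) (F t z) (Icc β γ) t :=
      intervalIntegral.integral_hasDerivWithinAt_right (hFint z hβmem ht) hmeas ((hFc z) t ht)
    have h2 : HasDerivWithinAt (fun r => φ β + ∫ s in β..r, F s z) (F t z) (Icc β γ) t :=
      hprim.const_add (φ β)
    have h3 : HasDerivWithinAt x (F t z) (Icc β γ) t :=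
      h2.congr (fun r hr => hxeq r hr) (hxeq t ht)
    have h4 : F t z = ∑ i, p i t (x (τ i t)) + q t := by
      simp only [hFdef, hxdef]
    rwa [h4] at h3
  refine ⟨x, ⟨hxc, hxφ, hxderiv⟩, ?_⟩
  rintro y ⟨hyc, hyφ, hyderiv⟩
  have hyrc : Continuous ((Icc α γ).restrict y) := hyc.restrict
  set u : C(↥(Icc α γ), X) := ⟨(Icc α γ).restrict y, hyrc⟩ with hudef
  have hyβ : y β = φ β := hyφ β ⟨hαβ, le_rfl⟩
  have hFu : ∀ s ∈ Icc β γ, F s u = ∑ i, p i s (y (τ i s)) + q s := by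
    intro s hs
    simp only [hFdef, hudef]
    congr 1
    refine Finset.sum_congr rfl fun i _ => ?_
    congr 1
    rw [hπval (hτI i s hs)]
    rfl
  have hG : ContinuousOn (fun s => ∑ i, p i s (y (τ i s)) + q s) (Icc β γ) := by
    apply ContinuousOn.add _ hq
    apply continuousOn_finset_sum
    intro i _
    exact (hp i).clm_apply (hyc.comp (hτc i) fun s hs => hτI i s hs)
  have hufix : Function.IsFixedPt T u := by
    apply ContinuousMap.ext
    intro t
    rcases le_total (t : ℝ) β with hle | hge
    · rw [hTle u t hle]
      exact (hyφ t ⟨t.2.1, hle⟩).symm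
    · rw [hTge u t hge]
      have htm : (t : ℝ) ∈ Icc β γ := ⟨hge, t.2.2⟩
      have hint : ∫ s in β..(t : ℝ), (∑ i, p i s (y (τ i s)) + q s) = y (t : ℝ) - y β := by
        apply intervalIntegral.integral_eq_sub_of_hasDeriv_right_of_le hge
        · exact hyc.mono fun s hs => ⟨hαβ.trans hs.1, hs.2.trans t.2.2⟩
        · intro s hs
          have hsβγ : s ∈ Icc β γ := ⟨hs.1.le, hs.2.le.trans t.2.2⟩
          have hnb : Icc β γ ∈ 𝓝 s := Icc_mem_nhds hs.1 (lt_of_lt_of_le hs.2 t.2.2)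
          exact ((hyderiv s hsβγ).hasDerivAt hnb).hasDerivWithinAt
        · exact (hG.mono (uIcc_subset_Icc hβmem htm)).intervalIntegrable
      have hcongr : ∫ s in β..(t : ℝ), F s u
          = ∫ s in β..(t : ℝ), (∑ i, p i s (y (τ i s)) + q s) :=
        intervalIntegral.integral_congr fun s hs => hFu s (uIcc_subset_Icc hβmem htm hs)
      rw [hcongr, hint, hyβ]
      show φ β + (y (t : ℝ) - φ β) = u t
      have : u t = y (t : ℝ) := rfl
      rw [this]
      abel
  have huz : u = z := hcontr.fixedPoint_unique (hufix.iterate k)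
  intro t ht
  have h1 : y t = u ⟨t, ht⟩ := rfl
  rw [h1, huz, hxdef]
  simp only []
  rw [hπval ht]
end

section
/- Let p_1, …, p_n : [β,∞) → B(X) and q : [β,∞) → X be continuous, and for i = 1,…,n let τ_i : [β,∞) → ℝ be continuous with α ≤ τ_i(t) ≤ t for all t ∈ [β,∞). Then there exists exactly one function x : [α,∞) → X such that x is continuous on [α,∞), x(t) = φ(t) for all t ∈ [α,β], and x is differentiable on [β,∞) with x′(t) = Σ_{i=1}^{n} p_i(t) x(τ_i(t)) + q(t) for all t ∈ [β,∞). -/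
/-!
Write the problem in integral form `x = P x` with `P = delayPicard p τ q φ β`, i.e.
`P x t = φ t` for `t ≤ β` and `P x t = φ β + ∫_β^t (∑ i, p i s (x (τ i s)) + q s) ds` for `t ≥ β`.
Since `τ i s ≤ s`, the operator `P` is of Volterra type: if `‖x - y‖ ≤ C (M (s - β))^k / k!`
below `s`, where `M` bounds `∑ ‖p i‖`, then `‖P x - P y‖ ≤ C (M (t - β))^(k+1) / (k+1)!` at `t`.
Hence on `C([α, T], X)` the iterates `P^k` have Lipschitz constants `(M (T - β))^k / k! → 0`,
some iterate is a contraction, and `P` has a unique fixed point. These local solutions agree on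
overlaps, so they glue to a solution on `[α, ∞)`, and the fundamental theorem of calculus
identifies fixed points of `P` with solutions of the differential equation.
-/

open Set Filter Topology MeasureTheory Function

theorem exists_isFixedPt_of_dist_iterate_le {E : Type*} [MetricSpace E] [CompleteSpace E]
    [Nonempty E] {f : E → E} {a : ℕ → ℝ} (ha : Tendsto a atTop (𝓝 0))
    (h : ∀ k x y, dist (f^[k] x) (f^[k] y) ≤ a k * dist x y) : ∃ x, IsFixedPt f x := by
  obtain ⟨k, hk⟩ := (ha.eventually (gt_mem_nhds one_pos)).exists
  have hcontr : ContractingWith (a k).toNNReal f^[k] :=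
    ⟨Real.toNNReal_lt_one.2 hk, LipschitzWith.of_dist_le_mul fun x y =>
      (h k x y).trans (by gcongr; exact Real.le_coe_toNNReal _)⟩
  exact ⟨_, hcontr.isFixedPt_fixedPoint_iterate⟩

theorem integral_mul_pow_div_factorial (M a b : ℝ) (k : ℕ) :
    ∫ s in a..b, M * ((M * (s - a)) ^ k / k.factorial) =
      (M * (b - a)) ^ (k + 1) / (k + 1).factorial := by
  have hderiv : ∀ s, HasDerivAt (fun s => (M * (s - a)) ^ (k + 1) / (k + 1).factorial)
      (M * ((M * (s - a)) ^ k / k.factorial)) s := by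
    intro s
    have := ((((hasDerivAt_id s).sub_const a).const_mul M).fun_pow (k + 1)).div_const
      ((k + 1).factorial : ℝ)
    refine this.congr_deriv ?_
    simp only [id, add_tsub_cancel_right, Nat.factorial_succ]
    push_cast
    field_simp
  rw [intervalIntegral.integral_eq_sub_of_hasDerivAt (fun s _ => hderiv s)
    (by apply Continuous.intervalIntegrable; fun_prop)]
  simp

theorem hasDerivWithinAt_integral_Ici {E : Type*} [NormedAddCommGroup E] [NormedSpace ℝ E]
    [CompleteSpace E] {g : ℝ → E} {a t : ℝ} (hg : ContinuousOn g (Ici a)) (ht : a ≤ t) :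
    HasDerivWithinAt (fun u => ∫ s in a..u, g s) (g t) (Ici a) t := by
  have : Fact (t ∈ Icc a (t + 1)) := ⟨⟨ht, by linarith⟩⟩
  have hIcc : ContinuousOn g (Icc a (t + 1)) := hg.mono Icc_subset_Ici_self
  have hnhds : Icc a (t + 1) ∈ 𝓝[Ici a] t := by
    rw [← Ici_inter_Iic]
    exact inter_mem_nhdsWithin _ (Iic_mem_nhds (lt_add_one t))
  exact (intervalIntegral.integral_hasDerivWithinAt_right
    ((hIcc.mono (Icc_subset_Icc_right (by linarith))).intervalIntegrable_of_Icc ht)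
    (hIcc.stronglyMeasurableAtFilter_nhdsWithin measurableSet_Icc t)
    (hIcc t Fact.out)).mono_of_mem_nhdsWithin hnhds

theorem mapsTo_Icc_of_forall_mem_Icc_self {f : ℝ → ℝ} {α β T : ℝ}
    (hf : ∀ s ∈ Icc β T, f s ∈ Icc α s) : MapsTo f (Icc β T) (Icc α T) :=
  fun s hs => ⟨(hf s hs).1, (hf s hs).2.trans hs.2⟩

section DelayEquation

variable {X : Type*} [NormedAddCommGroup X] [NormedSpace ℝ X] {n : ℕ}
  (p : Fin n → ℝ → X →L[ℝ] X) (τ : Fin n → ℝ → ℝ) (q φ : ℝ → X) (β : ℝ)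

def delayRHS (x : ℝ → X) (s : ℝ) : X := ∑ i, p i s (x (τ i s)) + q s

noncomputable def delayPicard (x : ℝ → X) (t : ℝ) : X :=
  φ (min t β) + ∫ s in β..max t β, delayRHS p τ q x s

variable {p τ q φ β} {α T : ℝ} {x y : ℝ → X}

theorem continuousOn_delayRHS {J S : Set ℝ} (hp : ∀ i, ContinuousOn (p i) J)
    (hτc : ∀ i, ContinuousOn (τ i) J) (hq : ContinuousOn q J) (hτ : ∀ i, MapsTo (τ i) J S)
    (hx : ContinuousOn x S) : ContinuousOn (delayRHS p τ q x) J :=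
  (continuousOn_finsetSum _ fun i _ => (hp i).clm_apply (hx.comp (hτc i) (hτ i))).add hq

theorem delayRHS_eqOn {J S : Set ℝ} (hτ : ∀ i, MapsTo (τ i) J S) (h : EqOn x y S) :
    EqOn (delayRHS p τ q x) (delayRHS p τ q y) J := fun s hs => by
  simp only [delayRHS, h (hτ _ hs)]

theorem norm_delayRHS_sub_le {s C : ℝ} (h : ∀ i, ‖x (τ i s) - y (τ i s)‖ ≤ C) :
    ‖delayRHS p τ q x s - delayRHS p τ q y s‖ ≤ (∑ i, ‖p i s‖) * C := by
  calc ‖delayRHS p τ q x s - delayRHS p τ q y s‖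
      = ‖∑ i, p i s (x (τ i s) - y (τ i s))‖ := by
        simp only [delayRHS, map_sub, Finset.sum_sub_distrib, add_sub_add_right_eq_sub]
    _ ≤ ∑ i, ‖p i s‖ * C :=
        (norm_sum_le _ _).trans <| Finset.sum_le_sum fun i _ =>
          ((p i s).le_opNorm _).trans (by gcongr; exact h i)
    _ = (∑ i, ‖p i s‖) * C := (Finset.sum_mul ..).symm

theorem delayPicard_of_le {t : ℝ} (ht : t ≤ β) : delayPicard p τ q φ β x t = φ t := by
  simp [delayPicard, ht]

theorem delayPicard_of_ge {t : ℝ} (ht : β ≤ t) :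
    delayPicard p τ q φ β x t = φ β + ∫ s in β..t, delayRHS p τ q x s := by
  simp [delayPicard, ht]

theorem delayPicard_congr {t : ℝ} (hτ : ∀ i, ∀ s ∈ Icc β t, τ i s ∈ Icc α s)
    (h : EqOn x y (Icc α t)) : delayPicard p τ q φ β x t = delayPicard p τ q φ β y t := by
  rcases le_total t β with htβ | hβt
  · rw [delayPicard_of_le htβ, delayPicard_of_le htβ]
  · rw [delayPicard_of_ge hβt, delayPicard_of_ge hβt,
      intervalIntegral.integral_congr (delayRHS_eqOn (S := Icc α t) (fun i =>
        mapsTo_Icc_of_forall_mem_Icc_self (hτ i)) h |>.mono (by rw [uIcc_of_le hβt]))]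

theorem continuousOn_delayPicard (hαβ : α ≤ β) (hβT : β ≤ T)
    (hφ : ContinuousOn φ (Icc α β)) (hp : ∀ i, ContinuousOn (p i) (Icc β T))
    (hτc : ∀ i, ContinuousOn (τ i) (Icc β T)) (hq : ContinuousOn q (Icc β T))
    (hτ : ∀ i, ∀ s ∈ Icc β T, τ i s ∈ Icc α s) (hx : ContinuousOn x (Icc α T)) :
    ContinuousOn (delayPicard p τ q φ β x) (Icc α T) := by
  have hg :=
    continuousOn_delayRHS hp hτc hq (fun i => mapsTo_Icc_of_forall_mem_Icc_self (hτ i)) hx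
  have hprim : ContinuousOn (fun u => ∫ s in β..u, delayRHS p τ q x s) (Icc β T) := by
    simpa [uIcc_of_le hβT] using intervalIntegral.continuousOn_primitive_interval
      (hg.integrableOn_Icc.mono_set (uIcc_of_le hβT).subset)
  refine (hφ.comp (continuous_id.min continuous_const).continuousOn fun t ht => ?_).add
    (hprim.comp (continuous_id.max continuous_const).continuousOn fun t ht => ?_)
  · exact ⟨le_min ht.1 hαβ, min_le_right _ _⟩
  · exact ⟨le_max_right _ _, max_le ht.2 hβT⟩

theorem norm_delayPicard_sub_le {M C : ℝ} {k : ℕ}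
    (hM : ∀ s ∈ Icc β T, ∑ i, ‖p i s‖ ≤ M) (hC : 0 ≤ C)
    (hτ : ∀ i, ∀ s ∈ Icc β T, τ i s ∈ Icc α s)
    (hx : ContinuousOn (delayRHS p τ q x) (Icc β T))
    (hy : ContinuousOn (delayRHS p τ q y) (Icc β T))
    (hxy : ∀ s ∈ Icc α T, ‖x s - y s‖ ≤ C * ((M * max (s - β) 0) ^ k / k.factorial))
    {t : ℝ} (ht : t ≤ T) :
    ‖delayPicard p τ q φ β x t - delayPicard p τ q φ β y t‖ ≤
      C * ((M * max (t - β) 0) ^ (k + 1) / (k + 1).factorial) := by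
  rcases le_total t β with htβ | hβt
  · simp [delayPicard_of_le htβ, htβ]
  have hM0 : 0 ≤ M :=
    (Finset.sum_nonneg fun i _ => norm_nonneg _).trans (hM β ⟨le_rfl, hβt.trans ht⟩)
  have hIcc : Icc β t ⊆ Icc β T := Icc_subset_Icc_right ht
  have hpointwise : ∀ s ∈ Ioc β t, ‖delayRHS p τ q x s - delayRHS p τ q y s‖ ≤
      M * (C * ((M * (s - β)) ^ k / k.factorial)) := fun s hs => by
    have hsT : s ∈ Icc β T := hIcc (Ioc_subset_Icc_self hs)
    refine (norm_delayRHS_sub_le fun i =>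
      (hxy _ (mapsTo_Icc_of_forall_mem_Icc_self (hτ i) hsT)).trans ?_).trans
        (mul_le_mul_of_nonneg_right (hM s hsT) ?_)
    · gcongr
      exact max_le (by linarith [(hτ i s hsT).2]) (sub_nonneg.2 hs.1.le)
    · have := sub_nonneg.2 hs.1.le
      positivity
  rw [delayPicard_of_ge hβt, delayPicard_of_ge hβt, add_sub_add_left_eq_sub,
    ← intervalIntegral.integral_sub ((hx.mono hIcc).intervalIntegrable_of_Icc hβt)
      ((hy.mono hIcc).intervalIntegrable_of_Icc hβt), max_eq_left (sub_nonneg.2 hβt)]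
  calc ‖∫ s in β..t, (delayRHS p τ q x s - delayRHS p τ q y s)‖
      ≤ ∫ s in β..t, M * (C * ((M * (s - β)) ^ k / k.factorial)) :=
        intervalIntegral.norm_integral_le_of_norm_le hβt (ae_of_all _ hpointwise)
          (by apply Continuous.intervalIntegrable; fun_prop)
    _ = C * ((M * (t - β)) ^ (k + 1) / (k + 1).factorial) := by
        rw [← integral_mul_pow_div_factorial, ← intervalIntegral.integral_const_mul]
        simp only [mul_left_comm]

theorem exists_forall_sum_norm_le (hp : ∀ i, ContinuousOn (p i) (Icc β T)) :
    ∃ M, ∀ s ∈ Icc β T, ∑ i, ‖p i s‖ ≤ M :=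
  let ⟨M, hM⟩ := isCompact_Icc.bddAbove_image (continuousOn_finsetSum _ fun i _ => (hp i).norm)
  ⟨M, fun _ hs => hM (mem_image_of_mem _ hs)⟩

theorem eqOn_of_eqOn_delayPicard (hp : ∀ i, ContinuousOn (p i) (Icc β T))
    (hτc : ∀ i, ContinuousOn (τ i) (Icc β T)) (hq : ContinuousOn q (Icc β T))
    (hτ : ∀ i, ∀ s ∈ Icc β T, τ i s ∈ Icc α s)
    (hx : ContinuousOn x (Icc α T)) (hy : ContinuousOn y (Icc α T))
    (hxfix : EqOn x (delayPicard p τ q φ β x) (Icc α T))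
    (hyfix : EqOn y (delayPicard p τ q φ β y) (Icc α T)) : EqOn x y (Icc α T) := by
  have hτ' i := mapsTo_Icc_of_forall_mem_Icc_self (hτ i)
  obtain ⟨M, hM⟩ := exists_forall_sum_norm_le hp
  obtain ⟨C, hC⟩ := isCompact_Icc.bddAbove_image (hx.sub hy).norm
  have hbound : ∀ k, ∀ t ∈ Icc α T,
      ‖x t - y t‖ ≤ max C 0 * ((M * max (t - β) 0) ^ k / k.factorial) := by
    intro k
    induction k with
    | zero => intro t ht; simpa using (hC (mem_image_of_mem _ ht)).trans (le_max_left C 0)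
    | succ k ih =>
      intro t ht
      rw [hxfix ht, hyfix ht]
      exact norm_delayPicard_sub_le hM (le_max_right C 0)
        hτ (continuousOn_delayRHS hp hτc hq hτ' hx) (continuousOn_delayRHS hp hτc hq hτ' hy)
        ih ht.2
  intro t ht
  have hlim := (FloorSemiring.tendsto_pow_div_factorial_atTop (M * max (t - β) 0)).const_mul
    (max C 0)
  rw [mul_zero] at hlim
  exact sub_eq_zero.1 (norm_le_zero_iff.1 (ge_of_tendsto' hlim fun k => hbound k t ht))

theorem dist_iterate_le_of_delayPicard {Φ : C(Icc α T, X) → C(Icc α T, X)} {M : ℝ}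
    (hαT : α ≤ T) (hβT : β ≤ T)
    (hΦ : ∀ f t, Φ f t = delayPicard p τ q φ β (IccExtend hαT f) t)
    (hp : ∀ i, ContinuousOn (p i) (Icc β T)) (hτc : ∀ i, ContinuousOn (τ i) (Icc β T))
    (hq : ContinuousOn q (Icc β T)) (hτ : ∀ i, ∀ s ∈ Icc β T, τ i s ∈ Icc α s)
    (hM : ∀ s ∈ Icc β T, ∑ i, ‖p i s‖ ≤ M) (k : ℕ) (f g : C(Icc α T, X)) :
    dist (Φ^[k] f) (Φ^[k] g) ≤ (M * (T - β)) ^ k / k.factorial * dist f g := by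
  have hrhs (f : C(Icc α T, X)) : ContinuousOn (delayRHS p τ q (IccExtend hαT f)) (Icc β T) :=
    continuousOn_delayRHS hp hτc hq (fun i => mapsTo_Icc_of_forall_mem_Icc_self (hτ i))
      f.continuous.Icc_extend'.continuousOn
  have hiter : ∀ k, ∀ t : Icc α T,
      ‖Φ^[k] f t - Φ^[k] g t‖ ≤ dist f g * ((M * max (t - β) 0) ^ k / k.factorial) := by
    intro k
    induction k with
    | zero => intro t; simpa [← dist_eq_norm] using ContinuousMap.dist_apply_le_dist t
    | succ k ih =>
      intro t
      rw [iterate_succ_apply', iterate_succ_apply', hΦ, hΦ]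
      exact norm_delayPicard_sub_le hM dist_nonneg hτ (hrhs _) (hrhs _)
        (fun s hs => by simpa only [IccExtend_of_mem _ _ hs] using ih ⟨s, hs⟩) t.2.2
  have hM0 : 0 ≤ M :=
    (Finset.sum_nonneg fun i _ => norm_nonneg _).trans (hM β ⟨le_rfl, hβT⟩)
  have hTβ : 0 ≤ T - β := sub_nonneg.2 hβT
  refine (ContinuousMap.dist_le (by positivity)).2 fun t => ?_
  rw [dist_eq_norm, mul_comm]
  refine (hiter k t).trans ?_
  gcongr
  exact max_le (by linarith [t.2.2]) hTβ

theorem exists_eqOn_delayPicard_Icc [CompleteSpace X] (hαβ : α ≤ β) (hβT : β ≤ T)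
    (hφ : ContinuousOn φ (Icc α β)) (hp : ∀ i, ContinuousOn (p i) (Icc β T))
    (hτc : ∀ i, ContinuousOn (τ i) (Icc β T)) (hq : ContinuousOn q (Icc β T))
    (hτ : ∀ i, ∀ s ∈ Icc β T, τ i s ∈ Icc α s) :
    ∃ x, ContinuousOn x (Icc α T) ∧ EqOn x (delayPicard p τ q φ β x) (Icc α T) := by
  have hαT : α ≤ T := hαβ.trans hβT
  have hext (f : C(Icc α T, X)) : ContinuousOn (IccExtend hαT f) (Icc α T) :=
    f.continuous.Icc_extend'.continuousOn
  let Φ (f : C(Icc α T, X)) : C(Icc α T, X) :=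
    ⟨fun t => delayPicard p τ q φ β (IccExtend hαT f) t,
      (continuousOn_delayPicard hαβ hβT hφ hp hτc hq hτ (hext f)).domRestrict⟩
  obtain ⟨M, hM⟩ := exists_forall_sum_norm_le hp
  have : Nonempty C(Icc α T, X) := ⟨0⟩
  obtain ⟨f, hf⟩ := exists_isFixedPt_of_dist_iterate_le
    (FloorSemiring.tendsto_pow_div_factorial_atTop _)
    (dist_iterate_le_of_delayPicard (Φ := Φ) hαT hβT (fun _ _ => rfl) hp hτc hq hτ hM)
  exact ⟨IccExtend hαT f, hext f, fun t ht =>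
    (IccExtend_of_mem _ _ ht).trans (DFunLike.congr_fun hf.symm ⟨t, ht⟩)⟩

theorem exists_eqOn_delayPicard_Ici [CompleteSpace X] (hαβ : α ≤ β)
    (hφ : ContinuousOn φ (Icc α β)) (hp : ∀ i, ContinuousOn (p i) (Ici β))
    (hτc : ∀ i, ContinuousOn (τ i) (Ici β)) (hq : ContinuousOn q (Ici β))
    (hτ : ∀ i, ∀ s ∈ Ici β, τ i s ∈ Icc α s) :
    ∃ x, ContinuousOn x (Ici α) ∧ EqOn x (delayPicard p τ q φ β x) (Ici α) := by
  have hp' T i : ContinuousOn (p i) (Icc β T) := (hp i).mono Icc_subset_Ici_self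
  have hτc' T i : ContinuousOn (τ i) (Icc β T) := (hτc i).mono Icc_subset_Ici_self
  have hq' T : ContinuousOn q (Icc β T) := hq.mono Icc_subset_Ici_self
  have hτ' T i s (hs : s ∈ Icc β T) : τ i s ∈ Icc α s := hτ i s hs.1
  have hloc T :
      ∃ x, ContinuousOn x (Icc α T) ∧ EqOn x (delayPicard p τ q φ β x) (Icc α T) := by
    obtain ⟨x, hxc, hxfix⟩ := exists_eqOn_delayPicard_Icc hαβ (le_max_right T β) hφ (hp' _)
      (hτc' _) (hq' _) (hτ' _)
    have hsub : Icc α T ⊆ Icc α (max T β) := Icc_subset_Icc_right (le_max_left T β)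
    exact ⟨x, hxc.mono hsub, hxfix.mono hsub⟩
  choose w hwc hwfix using hloc
  have hagree T : EqOn (fun t => w t t) (w T) (Icc α T) := fun t ht => by
    have hsub : Icc α t ⊆ Icc α T := Icc_subset_Icc_right ht.2
    exact eqOn_of_eqOn_delayPicard (hp' t) (hτc' t) (hq' t) (hτ' t) (hwc t) ((hwc T).mono hsub)
      (hwfix t) ((hwfix T).mono hsub) ⟨ht.1, le_rfl⟩
  refine ⟨fun t => w t t, fun t ht => ?_, fun t ht => ?_⟩
  · have hnhds : Icc α (t + 1) ∈ 𝓝[Ici α] t := by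
      rw [← Ici_inter_Iic]
      exact inter_mem_nhdsWithin _ (Iic_mem_nhds (lt_add_one t))
    exact ((hwc (t + 1) t ⟨ht, by linarith⟩).mono_of_mem_nhdsWithin hnhds).congr_of_eventuallyEq
      (eventuallyEq_of_mem hnhds (hagree _)) (hagree _ ⟨ht, by linarith⟩)
  · calc w t t = delayPicard p τ q φ β (w t) t := hwfix t ⟨ht, le_rfl⟩
      _ = delayPicard p τ q φ β (fun s => w s s) t :=
        delayPicard_congr (hτ' t) fun s hs => (hagree t hs).symm

theorem hasDerivWithinAt_of_eqOn_delayPicard [CompleteSpace X]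
    (hp : ∀ i, ContinuousOn (p i) (Ici β)) (hτc : ∀ i, ContinuousOn (τ i) (Ici β))
    (hq : ContinuousOn q (Ici β)) (hτ : ∀ i, ∀ s ∈ Ici β, τ i s ∈ Icc α s)
    (hx : ContinuousOn x (Ici α)) (hxfix : EqOn x (delayPicard p τ q φ β x) (Ici β))
    {t : ℝ} (ht : β ≤ t) :
    HasDerivWithinAt x (delayRHS p τ q x t) (Ici β) t := by
  have hg := continuousOn_delayRHS hp hτc hq (fun i s hs => (hτ i s hs).1) hx
  refine ((hasDerivWithinAt_integral_Ici hg ht).const_add (φ β)).congr (fun u hu => ?_) ?_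
  · rw [hxfix hu, delayPicard_of_ge hu]
  · rw [hxfix (mem_Ici.2 ht), delayPicard_of_ge ht]

theorem eqOn_delayPicard_of_hasDerivWithinAt [CompleteSpace X] (hαβ : α ≤ β)
    (hp : ∀ i, ContinuousOn (p i) (Ici β)) (hτc : ∀ i, ContinuousOn (τ i) (Ici β))
    (hq : ContinuousOn q (Ici β)) (hτ : ∀ i, ∀ s ∈ Ici β, τ i s ∈ Icc α s)
    (hy : ContinuousOn y (Ici α)) (hyφ : ∀ t ∈ Icc α β, y t = φ t)
    (hyd : ∀ t ∈ Ici β, HasDerivWithinAt y (delayRHS p τ q y t) (Ici β) t) :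
    EqOn y (delayPicard p τ q φ β y) (Ici α) := by
  intro t ht
  rcases le_total t β with htβ | hβt
  · rw [delayPicard_of_le htβ, hyφ t ⟨ht, htβ⟩]
  have hg := continuousOn_delayRHS hp hτc hq (fun i s hs => (hτ i s hs).1) hy
  rw [delayPicard_of_ge hβt, ← hyφ β ⟨hαβ, le_rfl⟩,
    intervalIntegral.integral_eq_sub_of_hasDeriv_right_of_le hβt
      (hy.mono fun s hs => hαβ.trans hs.1)
      (fun s hs => (hyd s hs.1.le).mono (Ioi_subset_Ici hs.1.le))
      ((hg.mono Icc_subset_Ici_self).intervalIntegrable_of_Icc hβt)]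
  abel

end DelayEquation

theorem linear_delay_global_existence_uniqueness_unbounded_general
    {X : Type*} [NormedAddCommGroup X] [NormedSpace ℝ X] [CompleteSpace X]
    {n : ℕ}
    {α β : ℝ} (hαβ : α ≤ β)
    (τ : Fin n → ℝ → ℝ)
    (hτc : ∀ i, ContinuousOn (τ i) (Ici β))
    (hτ : ∀ i, ∀ t ∈ Ici β, α ≤ τ i t ∧ τ i t ≤ t)
    (φ : ℝ → X) (hφ : ContinuousOn φ (Icc α β))
    (p : Fin n → ℝ → X →L[ℝ] X) (hp : ∀ i, ContinuousOn (p i) (Ici β))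
    (q : ℝ → X) (hq : ContinuousOn q (Ici β)) :
    ∃ x : ℝ → X,
      (ContinuousOn x (Ici α) ∧
        (∀ t ∈ Icc α β, x t = φ t) ∧
        (∀ t ∈ Ici β,
          HasDerivWithinAt x (∑ i, p i t (x (τ i t)) + q t) (Ici β) t)) ∧
      ∀ y : ℝ → X,
        (ContinuousOn y (Ici α) ∧
          (∀ t ∈ Icc α β, y t = φ t) ∧
          (∀ t ∈ Ici β,
            HasDerivWithinAt y (∑ i, p i t (y (τ i t)) + q t) (Ici β) t)) →
        EqOn y x (Ici α) := by
  obtain ⟨x, hxc, hxfix⟩ := exists_eqOn_delayPicard_Ici hαβ hφ hp hτc hq hτ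
  refine ⟨x, ⟨hxc, fun t ht => ?_, fun t ht => ?_⟩, ?_⟩
  · rw [hxfix ht.1, delayPicard_of_le ht.2]
  · exact hasDerivWithinAt_of_eqOn_delayPicard hp hτc hq hτ hxc
      (hxfix.mono (Ici_subset_Ici.2 hαβ)) ht
  · rintro y ⟨hyc, hyφ, hyd⟩ t ht
    have hτt i s (hs : s ∈ Icc β t) := hτ i s hs.1
    have hsub : Icc α t ⊆ Ici α := Icc_subset_Ici_self
    exact eqOn_of_eqOn_delayPicard (fun i => (hp i).mono Icc_subset_Ici_self)
      (fun i => (hτc i).mono Icc_subset_Ici_self) (hq.mono Icc_subset_Ici_self) hτt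
      (hyc.mono hsub) (hxc.mono hsub)
      ((eqOn_delayPicard_of_hasDerivWithinAt hαβ hp hτc hq hτ hyc hyφ hyd).mono hsub)
      (hxfix.mono hsub) ⟨ht, le_rfl⟩

/-- Global existence and uniqueness for linear delay differential equations on
the unbounded interval `[β, ∞)` (method of steps; continuous-time case). -/
theorem linear_delay_global_existence_uniqueness_unbounded
    {X : Type*} [NormedAddCommGroup X] [NormedSpace ℝ X] [CompleteSpace X]
    {n : ℕ} (hn : 0 < n)
    {α β : ℝ} (hαβ : α ≤ β)
    (τ : Fin n → ℝ → ℝ)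
    (hτc : ∀ i, ContinuousOn (τ i) (Ici β))
    (hτ : ∀ i, ∀ t ∈ Ici β, α ≤ τ i t ∧ τ i t ≤ t)
    (φ : ℝ → X) (hφ : ContinuousOn φ (Icc α β))
    (p : Fin n → ℝ → X →L[ℝ] X) (hp : ∀ i, ContinuousOn (p i) (Ici β))
    (q : ℝ → X) (hq : ContinuousOn q (Ici β)) :
    ∃ x : ℝ → X,
      (ContinuousOn x (Ici α) ∧
        (∀ t ∈ Icc α β, x t = φ t) ∧
        (∀ t ∈ Ici β,
          HasDerivWithinAt x (∑ i, p i t (x (τ i t)) + q t) (Ici β) t)) ∧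
      ∀ y : ℝ → X,
        (ContinuousOn y (Ici α) ∧
          (∀ t ∈ Icc α β, y t = φ t) ∧
          (∀ t ∈ Ici β,
            HasDerivWithinAt y (∑ i, p i t (y (τ i t)) + q t) (Ici β) t)) →
        EqOn y x (Ici α) :=
  linear_delay_global_existence_uniqueness_unbounded_general hαβ τ hτc hτ φ hφ p hp q hq
end

section
/- Let L > 0 and let f : [β,γ] × Xⁿ → X be continuous and satisfy the global Lipschitz condition ‖f(t,u₁,…,uₙ) − f(t,v₁,…,vₙ)‖ ≤ L·Σ_{i=1}^{n} ‖u_i − v_i‖ for all t ∈ [β,γ] and all u₁,…,uₙ,v₁,…,vₙ ∈ X (so that in particular f satisfies the linear growth bound ‖f(t,u₁,…,uₙ)‖ ≤ L·Σ_{i=1}^{n} ‖u_i‖ + ‖f(t,0,…,0)‖). Then there exists exactly one function x : [α,γ] → X such that x is continuous on [α,γ], x(t) = φ(t) for all t ∈ [α,β], and x is differentiable on [β,γ] with x′(t) = f(t, x(τ₁(t)), x(τ₂(t)), …, x(τₙ(t))) for all t ∈ [β,γ]. -/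
/-!
A solution is the same as a fixed point of the Picard operator on `C([α, γ], X)`,
`(T x)(t) = φ(t)` on `[α, β]` and `(T x)(t) = φ(β) + ∫_β^t f(s, x(τ₁ s), …, x(τₙ s)) ds`
on `[β, γ]`.
Because every delay satisfies `τᵢ(s) ≤ s`, the Lipschitz bound propagates along iterates:
`‖x - y‖ ≤ C (t - β)₊ᵐ / m!` pointwise implies `‖T x - T y‖ ≤ L n C (t - β)₊ᵐ⁺¹ / (m + 1)!`.
So `Tᵐ` is Lipschitz with constant `(L n (γ - β))ᵐ / m!`, which is `< 1` for large `m`, and the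
contraction principle for an iterate yields a unique fixed point on the whole interval.
-/

open Set Function intervalIntegral

theorem exists_unique_isFixedPt_of_dist_iterate_le {S : Type*} [MetricSpace S] [CompleteSpace S]
    [Nonempty S] {T : S → S} {K : ℝ} (hK : 0 ≤ K)
    (hT : ∀ (m : ℕ) (x y : S), dist (T^[m] x) (T^[m] y) ≤ K ^ m / m.factorial * dist x y) :
    ∃! x, IsFixedPt T x := by
  obtain ⟨m, hm⟩ : ∃ m : ℕ, K ^ m / m.factorial < 1 :=
    ((Real.summable_pow_div_factorial K).tendsto_atTop_zero.eventually_lt_const one_pos).exists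
  have hc : ContractingWith ⟨K ^ m / m.factorial, by positivity⟩ (T^[m]) :=
    ⟨by exact_mod_cast hm, LipschitzWith.of_dist_le_mul (hT m)⟩
  exact ⟨_, hc.isFixedPt_fixedPoint_iterate, fun y hy => hc.fixedPoint_unique (hy.iterate m)⟩

theorem integral_sub_pow_div_factorial (β t : ℝ) (m : ℕ) :
    ∫ s in β..t, (s - β) ^ m / m.factorial = (t - β) ^ (m + 1) / (m + 1).factorial := by
  rw [intervalIntegral.integral_div, intervalIntegral.integral_comp_sub_right (· ^ m), sub_self,
    integral_pow, zero_pow m.succ_ne_zero, sub_zero, Nat.factorial_succ]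
  push_cast
  field_simp

theorem dist_iterate_le_of_dist_le_pow_div_factorial {E : Type*} [MetricSpace E] {α β γ : ℝ}
    (hβγ : β ≤ γ) {T : C(Icc α γ, E) → C(Icc α γ, E)} {K : ℝ} (hK : 0 ≤ K)
    (hT : ∀ (m : ℕ) (C : ℝ) (x y : C(Icc α γ, E)), 0 ≤ C →
      (∀ t : Icc α γ, dist (x t) (y t) ≤ C * max ((t : ℝ) - β) 0 ^ m / m.factorial) →
      ∀ t : Icc α γ,
        dist (T x t) (T y t) ≤ K * C * max ((t : ℝ) - β) 0 ^ (m + 1) / (m + 1).factorial)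
    (m : ℕ) (x y : C(Icc α γ, E)) :
    dist (T^[m] x) (T^[m] y) ≤ (K * (γ - β)) ^ m / m.factorial * dist x y := by
  have hpt : ∀ (m : ℕ) (t : Icc α γ),
      dist (T^[m] x t) (T^[m] y t) ≤
        K ^ m * dist x y * max ((t : ℝ) - β) 0 ^ m / m.factorial := by
    intro m
    induction m with
    | zero => exact fun t => by simpa using ContinuousMap.dist_apply_le_dist t
    | succ m ih =>
      intro t
      rw [iterate_succ_apply', iterate_succ_apply']
      exact (hT m _ _ _ (by positivity) ih t).trans_eq (by ring)
  refine (ContinuousMap.dist_le (by positivity)).2 fun t => (hpt m t).trans ?_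
  have hw : max ((t : ℝ) - β) 0 ≤ γ - β := max_le (by linarith [t.2.2]) (by linarith)
  calc K ^ m * dist x y * max ((t : ℝ) - β) 0 ^ m / m.factorial
      ≤ K ^ m * dist x y * (γ - β) ^ m / m.factorial := by gcongr
    _ = (K * (γ - β)) ^ m / m.factorial * dist x y := by rw [mul_pow]; ring

namespace DelayEquation

def IsSolution {X : Type*} [NormedAddCommGroup X] [NormedSpace ℝ X] {n : ℕ} (α β γ : ℝ)
    (τ : Fin n → ℝ → ℝ) (φ : ℝ → X) (f : ℝ → (Fin n → X) → X) (x : ℝ → X) : Prop :=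
  ContinuousOn x (Icc α γ) ∧ (∀ t ∈ Icc α β, x t = φ t) ∧
    ∀ t ∈ Icc β γ, HasDerivWithinAt x (f t fun i => x (τ i t)) (Icc β γ) t

variable {X : Type*} [NormedAddCommGroup X] {n : ℕ} {α β γ : ℝ}
  (hαβ : α ≤ β) (hβγ : β ≤ γ) (τ : Fin n → ℝ → ℝ) (φ : ℝ → X) (f : ℝ → (Fin n → X) → X)

/-- `x` and the right-hand side are extended constantly off `[α, γ]` and `[β, γ]`, so that the
Picard integral is taken of a function continuous on all of `ℝ`. -/
noncomputable def rhs (x : C(Icc α γ, X)) : ℝ → X :=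
  IccExtend hβγ fun s => f s fun i => IccExtend (hαβ.trans hβγ) x (τ i s)

variable {τ φ f}

theorem rhs_of_mem (x : C(Icc α γ, X)) {s : ℝ} (hs : s ∈ Icc β γ) :
    rhs hαβ hβγ τ f x s = f s fun i => IccExtend (hαβ.trans hβγ) x (τ i s) :=
  IccExtend_of_mem _ _ hs

theorem continuous_rhs (hτc : ∀ i, ContinuousOn (τ i) (Icc β γ))
    (hfc : ContinuousOn (fun p : ℝ × (Fin n → X) => f p.1 p.2) (Icc β γ ×ˢ univ))
    (x : C(Icc α γ, X)) : Continuous (rhs hαβ hβγ τ f x) := by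
  refine Continuous.Icc_extend' (hfc.comp_continuous
    (continuous_subtype_val.prodMk (continuous_pi fun i => ?_)) fun s => ⟨s.2, mem_univ _⟩)
  exact (continuous_IccExtend_iff.2 x.continuous).comp (hτc i).domRestrict

theorem norm_rhs_sub_le {L : ℝ} (hL : 0 ≤ L) (hτ : ∀ i, ∀ t ∈ Icc β γ, τ i t ≤ t)
    (hfl : ∀ t ∈ Icc β γ, ∀ u v : Fin n → X, ‖f t u - f t v‖ ≤ L * ∑ i, ‖u i - v i‖)
    {x y : C(Icc α γ, X)} {s D : ℝ} (hs : s ∈ Icc β γ)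
    (hxy : ∀ u : Icc α γ, (u : ℝ) ≤ s → dist (x u) (y u) ≤ D) :
    ‖rhs hαβ hβγ τ f x s - rhs hαβ hβγ τ f y s‖ ≤ L * n * D := by
  have hsαγ : s ∈ Icc α γ := ⟨hαβ.trans hs.1, hs.2⟩
  have hdelay : ∀ i, ‖IccExtend (hαβ.trans hβγ) x (τ i s) -
      IccExtend (hαβ.trans hβγ) y (τ i s)‖ ≤ D := fun i => by
    rw [← dist_eq_norm]
    refine hxy _ ?_
    calc (projIcc α γ _ (τ i s) : ℝ) ≤ projIcc α γ (hαβ.trans hβγ) s :=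
          monotone_projIcc _ (hτ i s hs)
      _ = s := by rw [projIcc_of_mem _ hsαγ]
  rw [rhs_of_mem _ _ x hs, rhs_of_mem _ _ y hs]
  calc _ ≤ L * ∑ i,
        ‖IccExtend (hαβ.trans hβγ) x (τ i s) - IccExtend (hαβ.trans hβγ) y (τ i s)‖ :=
      hfl s hs _ _
    _ ≤ L * ∑ _i : Fin n, D := by gcongr with i; exact hdelay i
    _ = L * n * D := by
      rw [Finset.sum_const, Finset.card_univ, Fintype.card_fin, nsmul_eq_mul, mul_assoc]

variable (τ φ f) [NormedSpace ℝ X]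

noncomputable def picard (x : C(Icc α γ, X)) (t : ℝ) : X :=
  IccExtend hαβ ((Icc α β).domRestrict φ) t + ∫ s in β..max t β, rhs hαβ hβγ τ f x s

variable {τ φ f}

theorem picard_of_mem_Icc_left (x : C(Icc α γ, X)) {t : ℝ} (ht : t ∈ Icc α β) :
    picard hαβ hβγ τ φ f x t = φ t := by
  rw [picard, IccExtend_of_mem _ _ ht, max_eq_right ht.2, integral_same, add_zero,
    domRestrict_apply]

theorem picard_of_le (x : C(Icc α γ, X)) {t : ℝ} (ht : β ≤ t) :
    picard hαβ hβγ τ φ f x t = φ β + ∫ s in β..t, rhs hαβ hβγ τ f x s := by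
  rw [picard, IccExtend_of_right_le _ _ ht, max_eq_left ht, domRestrict_apply]

theorem continuous_picard (hτc : ∀ i, ContinuousOn (τ i) (Icc β γ))
    (hφ : ContinuousOn φ (Icc α β))
    (hfc : ContinuousOn (fun p : ℝ × (Fin n → X) => f p.1 p.2) (Icc β γ ×ˢ univ))
    (x : C(Icc α γ, X)) : Continuous (picard hαβ hβγ τ φ f x) :=
  hφ.domRestrict.Icc_extend'.add <| (continuous_primitive
    (continuous_rhs hαβ hβγ hτc hfc x).intervalIntegrable β).comp
      (continuous_id.max continuous_const)

noncomputable def picardMap (hτc : ∀ i, ContinuousOn (τ i) (Icc β γ))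
    (hφ : ContinuousOn φ (Icc α β))
    (hfc : ContinuousOn (fun p : ℝ × (Fin n → X) => f p.1 p.2) (Icc β γ ×ˢ univ))
    (x : C(Icc α γ, X)) : C(Icc α γ, X) :=
  ⟨fun t => picard hαβ hβγ τ φ f x t,
    (continuous_picard hαβ hβγ hτc hφ hfc x).comp continuous_subtype_val⟩

theorem dist_picard_le {L : ℝ} (hL : 0 ≤ L) (hτc : ∀ i, ContinuousOn (τ i) (Icc β γ))
    (hτ : ∀ i, ∀ t ∈ Icc β γ, τ i t ≤ t)
    (hfc : ContinuousOn (fun p : ℝ × (Fin n → X) => f p.1 p.2) (Icc β γ ×ˢ univ))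
    (hfl : ∀ t ∈ Icc β γ, ∀ u v : Fin n → X, ‖f t u - f t v‖ ≤ L * ∑ i, ‖u i - v i‖)
    {m : ℕ} {C : ℝ} (hC : 0 ≤ C) {x y : C(Icc α γ, X)}
    (hxy : ∀ t : Icc α γ, dist (x t) (y t) ≤ C * max ((t : ℝ) - β) 0 ^ m / m.factorial)
    {t : ℝ} (ht : t ∈ Icc α γ) :
    dist (picard hαβ hβγ τ φ f x t) (picard hαβ hβγ τ φ f y t) ≤
      L * n * C * max (t - β) 0 ^ (m + 1) / (m + 1).factorial := by
  rcases le_total t β with htβ | hβt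
  · rw [picard_of_mem_Icc_left _ _ x ⟨ht.1, htβ⟩, picard_of_mem_Icc_left _ _ y ⟨ht.1, htβ⟩,
      dist_self, max_eq_right (sub_nonpos.2 htβ), zero_pow m.succ_ne_zero, mul_zero, zero_div]
  have hrhs : ∀ s ∈ Ioc β t, ‖rhs hαβ hβγ τ f x s - rhs hαβ hβγ τ f y s‖ ≤
      L * n * C * ((s - β) ^ m / m.factorial) := fun s hs => by
    rw [mul_assoc _ C, ← mul_div_assoc]
    refine norm_rhs_sub_le hαβ hβγ hL hτ hfl ⟨hs.1.le, hs.2.trans ht.2⟩ fun u hu => ?_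
    refine (hxy u).trans ?_
    gcongr
    exact max_le (by linarith) (by linarith [hs.1])
  rw [picard_of_le _ _ x hβt, picard_of_le _ _ y hβt, dist_add_left, dist_eq_norm,
    ← integral_sub ((continuous_rhs hαβ hβγ hτc hfc x).intervalIntegrable _ _)
      ((continuous_rhs hαβ hβγ hτc hfc y).intervalIntegrable _ _),
    max_eq_left (sub_nonneg.2 hβt)]
  calc _ ≤ ∫ s in β..t, L * n * C * ((s - β) ^ m / m.factorial) :=
        norm_integral_le_of_norm_le hβt (.of_forall hrhs)
          (Continuous.intervalIntegrable (by fun_prop) _ _)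
    _ = _ := by rw [integral_const_mul, integral_sub_pow_div_factorial, mul_div_assoc]

variable [CompleteSpace X]

theorem hasDerivWithinAt_picard (hτc : ∀ i, ContinuousOn (τ i) (Icc β γ))
    (hfc : ContinuousOn (fun p : ℝ × (Fin n → X) => f p.1 p.2) (Icc β γ ×ˢ univ))
    (x : C(Icc α γ, X)) {t : ℝ} (ht : t ∈ Icc β γ) :
    HasDerivWithinAt (picard hαβ hβγ τ φ f x) (rhs hαβ hβγ τ f x t) (Icc β γ) t := by
  have hg := continuous_rhs hαβ hβγ hτc hfc x
  have : Fact (t ∈ Icc β γ) := ⟨ht⟩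
  refine ((integral_hasDerivWithinAt_right (hg.intervalIntegrable β t)
    (hg.stronglyMeasurableAtFilter _ _) hg.continuousWithinAt).const_add (φ β)).congr
    (fun s hs => picard_of_le hαβ hβγ x hs.1) (picard_of_le hαβ hβγ x ht.1)

theorem isSolution_IccExtend_of_isFixedPt (hτc : ∀ i, ContinuousOn (τ i) (Icc β γ))
    (hφ : ContinuousOn φ (Icc α β))
    (hfc : ContinuousOn (fun p : ℝ × (Fin n → X) => f p.1 p.2) (Icc β γ ×ˢ univ))
    {x : C(Icc α γ, X)} (hx : IsFixedPt (picardMap hαβ hβγ hτc hφ hfc) x) :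
    IsSolution α β γ τ φ f (IccExtend (hαβ.trans hβγ) x) := by
  have hpicard : ∀ t ∈ Icc α γ, IccExtend (hαβ.trans hβγ) x t = picard hαβ hβγ τ φ f x t :=
    fun t ht => by
      rw [IccExtend_of_mem _ _ ht]
      exact (DFunLike.congr_fun hx ⟨t, ht⟩).symm
  refine ⟨(continuous_IccExtend_iff.2 x.continuous).continuousOn, fun t ht => ?_,
    fun t ht => ?_⟩
  · rw [hpicard t ⟨ht.1, ht.2.trans hβγ⟩, picard_of_mem_Icc_left _ _ _ ht]
  · have hsub : Icc β γ ⊆ Icc α γ := Icc_subset_Icc_left hαβ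
    rw [← rhs_of_mem (τ := τ) (f := f) hαβ hβγ x ht]
    exact (hasDerivWithinAt_picard hαβ hβγ hτc hfc x ht).congr
      (fun s hs => hpicard s (hsub hs)) (hpicard t (hsub ht))

theorem IsSolution.isFixedPt_picardMap (hτc : ∀ i, ContinuousOn (τ i) (Icc β γ))
    (hτ : ∀ i, ∀ t ∈ Icc β γ, τ i t ∈ Icc α γ) (hφ : ContinuousOn φ (Icc α β))
    (hfc : ContinuousOn (fun p : ℝ × (Fin n → X) => f p.1 p.2) (Icc β γ ×ˢ univ))
    {y : ℝ → X} (hy : IsSolution α β γ τ φ f y) :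
    IsFixedPt (picardMap hαβ hβγ hτc hφ hfc)
      ⟨(Icc α γ).domRestrict y, hy.1.domRestrict⟩ := by
  obtain ⟨hyc, hyφ, hyd⟩ := hy
  set Y : C(Icc α γ, X) := ⟨(Icc α γ).domRestrict y, hyc.domRestrict⟩
  have hrhs : ∀ s ∈ Icc β γ, rhs hαβ hβγ τ f Y s = f s fun i => y (τ i s) := by
    intro s hs
    rw [rhs_of_mem _ _ _ hs]
    exact congrArg (f s) (funext fun i => IccExtend_of_mem _ _ (hτ i s hs))
  refine ContinuousMap.ext fun ⟨t, ht⟩ => ?_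
  change picard hαβ hβγ τ φ f Y t = y t
  rcases le_total t β with htβ | hβt
  · rw [picard_of_mem_Icc_left _ _ _ ⟨ht.1, htβ⟩, hyφ t ⟨ht.1, htβ⟩]
  have hderiv : ∀ s ∈ Ioo β t, HasDerivAt y (rhs hαβ hβγ τ f Y s) s := by
    intro s hs
    have hs' : s ∈ Icc β γ := ⟨hs.1.le, hs.2.le.trans ht.2⟩
    rw [hrhs s hs']
    exact (hyd s hs').hasDerivAt (Icc_mem_nhds hs.1 (hs.2.trans_le ht.2))
  rw [picard_of_le _ _ _ hβt, integral_eq_sub_of_hasDerivAt_of_le hβt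
    (hyc.mono (Icc_subset_Icc hαβ ht.2)) hderiv
    ((continuous_rhs hαβ hβγ hτc hfc Y).intervalIntegrable _ _), hyφ β ⟨hαβ, le_rfl⟩]
  abel

end DelayEquation

open DelayEquation in
theorem nonlinear_delay_global_existence_uniqueness_general
    {X : Type*} [NormedAddCommGroup X] [NormedSpace ℝ X] [CompleteSpace X]
    {n : ℕ}
    {α β γ : ℝ} (hαβ : α ≤ β) (hβγ : β < γ)
    (τ : Fin n → ℝ → ℝ)
    (hτc : ∀ i, ContinuousOn (τ i) (Icc β γ))
    (hτ : ∀ i, ∀ t ∈ Icc β γ, α ≤ τ i t ∧ τ i t ≤ t)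
    (φ : ℝ → X) (hφ : ContinuousOn φ (Icc α β))
    {L : ℝ} (hL : 0 < L)
    (f : ℝ → (Fin n → X) → X)
    (hfc : ContinuousOn (fun p : ℝ × (Fin n → X) => f p.1 p.2)
      (Icc β γ ×ˢ (univ : Set (Fin n → X))))
    (hfl : ∀ t ∈ Icc β γ, ∀ u v : Fin n → X,
      ‖f t u - f t v‖ ≤ L * ∑ i, ‖u i - v i‖) :
    ∃ x : ℝ → X,
      (ContinuousOn x (Icc α γ) ∧
        (∀ t ∈ Icc α β, x t = φ t) ∧
        (∀ t ∈ Icc β γ,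
          HasDerivWithinAt x (f t (fun i => x (τ i t))) (Icc β γ) t)) ∧
      ∀ y : ℝ → X,
        (ContinuousOn y (Icc α γ) ∧
          (∀ t ∈ Icc α β, y t = φ t) ∧
          (∀ t ∈ Icc β γ,
            HasDerivWithinAt y (f t (fun i => y (τ i t))) (Icc β γ) t)) →
        EqOn y x (Icc α γ) := by
  have hτ_le : ∀ i, ∀ t ∈ Icc β γ, τ i t ≤ t := fun i t ht => (hτ i t ht).2
  have hτ_mem : ∀ i, ∀ t ∈ Icc β γ, τ i t ∈ Icc α γ := fun i t ht =>
    ⟨(hτ i t ht).1, (hτ i t ht).2.trans ht.2⟩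
  have hLn : 0 ≤ L * n := by positivity
  obtain ⟨z, hz, hz_unique⟩ := exists_unique_isFixedPt_of_dist_iterate_le
    (mul_nonneg hLn (sub_nonneg.2 hβγ.le))
    (dist_iterate_le_of_dist_le_pow_div_factorial (T := picardMap hαβ hβγ.le hτc hφ hfc)
      hβγ.le hLn fun m C x y hC hxy t =>
        dist_picard_le hαβ hβγ.le hL.le hτc hτ_le hfc hfl hC hxy t.2)
  refine ⟨_, isSolution_IccExtend_of_isFixedPt hαβ hβγ.le hτc hφ hfc hz, fun y hy t ht => ?_⟩
  rw [IccExtend_of_mem _ _ ht,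
    ← hz_unique _ (IsSolution.isFixedPt_picardMap hαβ hβγ.le hτc hτ_mem hφ hfc hy)]
  rfl

/-- Global existence and uniqueness on `[α, γ]` for nonlinear delay
differential equations with a globally Lipschitz (hence linearly growing)
nonlinearity (continuous-time case of the paper's remark). -/
theorem nonlinear_delay_global_existence_uniqueness
    {X : Type*} [NormedAddCommGroup X] [NormedSpace ℝ X] [CompleteSpace X]
    {n : ℕ} (hn : 0 < n)
    {α β γ : ℝ} (hαβ : α ≤ β) (hβγ : β < γ)
    (τ : Fin n → ℝ → ℝ)
    (hτc : ∀ i, ContinuousOn (τ i) (Icc β γ))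
    (hτ : ∀ i, ∀ t ∈ Icc β γ, α ≤ τ i t ∧ τ i t ≤ t)
    (φ : ℝ → X) (hφ : ContinuousOn φ (Icc α β))
    {L : ℝ} (hL : 0 < L)
    (f : ℝ → (Fin n → X) → X)
    (hfc : ContinuousOn (fun p : ℝ × (Fin n → X) => f p.1 p.2)
      (Icc β γ ×ˢ (univ : Set (Fin n → X))))
    (hfl : ∀ t ∈ Icc β γ, ∀ u v : Fin n → X,
      ‖f t u - f t v‖ ≤ L * ∑ i, ‖u i - v i‖) :
    ∃ x : ℝ → X,
      (ContinuousOn x (Icc α γ) ∧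
        (∀ t ∈ Icc α β, x t = φ t) ∧
        (∀ t ∈ Icc β γ,
          HasDerivWithinAt x (f t (fun i => x (τ i t))) (Icc β γ) t)) ∧
      ∀ y : ℝ → X,
        (ContinuousOn y (Icc α γ) ∧
          (∀ t ∈ Icc α β, y t = φ t) ∧
          (∀ t ∈ Icc β γ,
            HasDerivWithinAt y (f t (fun i => y (τ i t))) (Icc β γ) t)) →
        EqOn y x (Icc α γ) :=
  nonlinear_delay_global_existence_uniqueness_general hαβ hβγ τ hτc hτ φ hφ hL f hfc hfl
end

section
/- Let α ≤ β ≤ γ be integers, let p_1, …, p_n : {β, …, γ−1} → B(X) and q : {β, …, γ−1} → X be arbitrary, and for i = 1,…,n let τ_i : {β, …, γ−1} → ℤ satisfy α ≤ τ_i(t) ≤ t. For each ζ ∈ {β, …, γ}, define the principal solution 𝒳(·,ζ) : {α, …, γ} → B(X) by: 𝒳(t,ζ) = 0 for α ≤ t < ζ, 𝒳(ζ,ζ) = id_X, and 𝒳(t+1,ζ) = 𝒳(t,ζ) + Σ_{i=1}^{n} p_i(t) ∘ 𝒳(τ_i(t),ζ) for ζ ≤ t ≤ γ−1. If x : {α,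 …, γ} → X satisfies x(t) = φ(t) for t ∈ {α, …, β} and x(t+1) − x(t) = Σ_{i=1}^{n} p_i(t) x(τ_i(t)) + q(t) for β ≤ t ≤ γ−1, then for all t ∈ {β, …, γ}: x(t) = 𝒳(t,β) φ(β) + Σ_{s=β}^{t−1} 𝒳(t,s+1) q(s) + Σ_{s=β}^{t−1} 𝒳(t,s+1) ( Σ_{i=1}^{n} [τ_i(s) < β] · p_i(s) φ(τ_i(s)) ), where [τ_i(s) < β] equals 1 if τ_i(s) < β and 0 otherwise. -/
open Set

/-!
Extend the right-hand side `v` of the formula by `φ` before `β`. Because `𝒳(·, s + 1)` vanishes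
before `s + 1` and `τ i t ≤ t`, the function `𝒳(·, s + 1)` obeys the homogeneous recurrence on all
of `[β, γ - 1]` except for a jump `id` at `t = s`; hence `v` obeys the recurrence with forcing
`f s = q s + ∑ i, [τ i s < β] p i s (φ (τ i s))`, and this extra forcing is exactly what the
extension by `φ` feeds back through the delays. So the extended `v` solves the same initial value
problem as `x`, and solutions of a delay recurrence are determined by their initial values.
-/

theorem eqOn_Icc_of_delay_recurrence {ι X : Type*} [AddGroup X] {α β γ : ℤ}
    {τ : ι → ℤ → ℤ} (hαβ : α ≤ β)
    (hτ : ∀ i, ∀ t ∈ Icc β (γ - 1), α ≤ τ i t ∧ τ i t ≤ t)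
    (F : ℤ → (ι → X) → X) {x y : ℤ → X} (hxy : EqOn x y (Icc α β))
    (hx : ∀ t ∈ Icc β (γ - 1), x (t + 1) - x t = F t fun i => x (τ i t))
    (hy : ∀ t ∈ Icc β (γ - 1), y (t + 1) - y t = F t fun i => y (τ i t)) :
    EqOn x y (Icc α γ) := by
  have hprefix : ∀ m, β ≤ m → m ≤ γ → EqOn x y (Icc α m) := by
    refine Int.leInduction (fun _ => hxy) fun m hβm IH hmγ t ⟨hαt, htm⟩ => ?_
    have hm : m ∈ Icc β (γ - 1) := ⟨hβm, by omega⟩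
    have IH := IH (by omega)
    obtain htm | rfl : t ≤ m ∨ t = m + 1 := by omega
    · exact IH ⟨hαt, htm⟩
    have hdelay : ∀ i, x (τ i m) = y (τ i m) := fun i => IH (hτ i m hm)
    rw [← sub_add_cancel (x (m + 1)) (x m), ← sub_add_cancel (y (m + 1)) (y m), hx m hm,
      hy m hm, IH ⟨by omega, le_rfl⟩]
    simp only [hdelay]
  intro t ⟨hαt, htγ⟩
  by_cases htβ : t ≤ β
  · exact hxy ⟨hαt, htβ⟩
  · exact hprefix t (by omega) htγ ⟨hαt, le_rfl⟩

section PrincipalSolution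

variable {ι 𝕜 X : Type*} [Fintype ι] [NontriviallyNormedField 𝕜] [NormedAddCommGroup X]
  [NormedSpace 𝕜 X] {α β γ : ℤ} {τ : ι → ℤ → ℤ} {p : ι → ℤ → X →L[𝕜] X}
  {XX : ℤ → ℤ → X →L[𝕜] X}

theorem principalSolution_succ_apply (hαβ : α ≤ β)
    (hτ : ∀ i, ∀ t ∈ Icc β (γ - 1), α ≤ τ i t ∧ τ i t ≤ t)
    (hXX0 : ∀ ζ ∈ Icc β γ, ∀ t ∈ Ico α ζ, XX t ζ = 0)
    (hXXinit : ∀ ζ ∈ Icc β γ, XX ζ ζ = ContinuousLinearMap.id 𝕜 X)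
    (hXXrec : ∀ ζ ∈ Icc β γ, ∀ t ∈ Icc ζ (γ - 1),
      XX (t + 1) ζ = XX t ζ + ∑ i, (p i t).comp (XX (τ i t) ζ))
    {ζ t : ℤ} (hζ : ζ ∈ Icc β γ) (ht : t ∈ Icc β (γ - 1)) (y : X) :
    XX (t + 1) ζ y = XX t ζ y + ∑ i, p i t (XX (τ i t) ζ y) + if t + 1 = ζ then y else 0 := by
  obtain htζ | htζ : ζ ≤ t ∨ t < ζ := le_or_gt ζ t
  · rw [hXXrec ζ hζ t ⟨htζ, ht.2⟩, if_neg (by omega)]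
    simp
  have hdelay : ∀ i, XX (τ i t) ζ = 0 := fun i =>
    hXX0 ζ hζ _ ⟨(hτ i t ht).1, (hτ i t ht).2.trans_lt htζ⟩
  simp only [hdelay, hXX0 ζ hζ t ⟨hαβ.trans ht.1, htζ⟩, zero_apply,
    map_zero, Finset.sum_const_zero, zero_add]
  obtain rfl | hlt : ζ = t + 1 ∨ t + 1 < ζ := by omega
  · simp [hXXinit _ hζ]
  · simp [hXX0 ζ hζ (t + 1) ⟨by linarith [ht.1], hlt⟩, hlt.ne]

/-- The sum runs over all of `[β, γ)` rather than `[β, t)`: the extra terms vanish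
(`variationOfParameters_eq_sum_Ico`), and the fixed range makes the function a superposition of
the functions `𝒳(·, s + 1)`. -/
noncomputable def variationOfParameters (XX : ℤ → ℤ → X →L[𝕜] X) (β γ : ℤ) (x₀ : X)
    (f : ℤ → X) (t : ℤ) : X :=
  XX t β x₀ + ∑ s ∈ Finset.Ico β γ, XX t (s + 1) (f s)

theorem variationOfParameters_succ_sub (hαβ : α ≤ β)
    (hτ : ∀ i, ∀ t ∈ Icc β (γ - 1), α ≤ τ i t ∧ τ i t ≤ t)
    (hXX0 : ∀ ζ ∈ Icc β γ, ∀ t ∈ Ico α ζ, XX t ζ = 0)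
    (hXXinit : ∀ ζ ∈ Icc β γ, XX ζ ζ = ContinuousLinearMap.id 𝕜 X)
    (hXXrec : ∀ ζ ∈ Icc β γ, ∀ t ∈ Icc ζ (γ - 1),
      XX (t + 1) ζ = XX t ζ + ∑ i, (p i t).comp (XX (τ i t) ζ))
    (x₀ : X) (f : ℤ → X) {t : ℤ} (ht : t ∈ Icc β (γ - 1)) :
    variationOfParameters XX β γ x₀ f (t + 1) - variationOfParameters XX β γ x₀ f t =
      ∑ i, p i t (variationOfParameters XX β γ x₀ f (τ i t)) + f t := by
  obtain ⟨hβt, htγ⟩ := id ht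
  have hstep := fun ζ (hζ : ζ ∈ Icc β γ) =>
    principalSolution_succ_apply hαβ hτ hXX0 hXXinit hXXrec hζ ht
  have hsum : ∑ s ∈ Finset.Ico β γ, XX (t + 1) (s + 1) (f s) =
      ∑ s ∈ Finset.Ico β γ, (XX t (s + 1) (f s) + ∑ i, p i t (XX (τ i t) (s + 1) (f s))) +
        f t := by
    have hs : ∀ s ∈ Finset.Ico β γ, s + 1 ∈ Icc β γ := fun s hs => by
      simp only [Finset.mem_Ico, mem_Icc] at hs ⊢
      omega
    rw [Finset.sum_congr rfl fun s h => hstep (s + 1) (hs s h) (f s), Finset.sum_add_distrib]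
    simp only [add_left_inj, Finset.sum_ite_eq, Finset.mem_Ico]
    rw [if_pos ⟨hβt, by omega⟩]
  simp only [variationOfParameters, hstep β ⟨le_rfl, by omega⟩, hsum, map_add, map_sum,
    Finset.sum_add_distrib]
  rw [Finset.sum_comm]
  simp only [show t + 1 ≠ β by omega, if_false]
  abel

theorem variationOfParameters_eq_sum_Ico
    (hXX0 : ∀ ζ ∈ Icc β γ, ∀ t ∈ Ico α ζ, XX t ζ = 0)
    (x₀ : X) (f : ℤ → X) {t : ℤ} (ht : t ∈ Icc α γ) :
    variationOfParameters XX β γ x₀ f t =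
      XX t β x₀ + ∑ s ∈ Finset.Ico β t, XX t (s + 1) (f s) := by
  obtain ⟨hαt, htγ⟩ := ht
  rw [variationOfParameters, Finset.sum_subset (Finset.Ico_subset_Ico_right htγ)]
  intro s hs hst
  simp only [Finset.mem_Ico, not_and, not_lt] at hs hst
  rw [hXX0 (s + 1) ⟨by omega, by omega⟩ t ⟨hαt, by omega⟩, zero_apply]

theorem variationOfParameters_eq_zero_of_lt (hβγ : β ≤ γ)
    (hXX0 : ∀ ζ ∈ Icc β γ, ∀ t ∈ Ico α ζ, XX t ζ = 0)
    (x₀ : X) (f : ℤ → X) {t : ℤ} (ht : t ∈ Ico α β) :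
    variationOfParameters XX β γ x₀ f t = 0 := by
  rw [variationOfParameters_eq_sum_Ico hXX0 x₀ f ⟨ht.1, by linarith [ht.2]⟩,
    hXX0 β ⟨le_rfl, hβγ⟩ t ht, Finset.Ico_eq_empty_of_le ht.2.le]
  simp

theorem variationOfParameters_self (hαβ : α ≤ β) (hβγ : β ≤ γ)
    (hXX0 : ∀ ζ ∈ Icc β γ, ∀ t ∈ Ico α ζ, XX t ζ = 0)
    (hXXinit : ∀ ζ ∈ Icc β γ, XX ζ ζ = ContinuousLinearMap.id 𝕜 X)
    (x₀ : X) (f : ℤ → X) :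
    variationOfParameters XX β γ x₀ f β = x₀ := by
  rw [variationOfParameters_eq_sum_Ico hXX0 x₀ f ⟨hαβ, hβγ⟩, hXXinit β ⟨le_rfl, hβγ⟩]
  simp

end PrincipalSolution

theorem discrete_linear_delay_variation_of_parameters_general
    {X : Type*} [NormedAddCommGroup X] [NormedSpace ℝ X]
    {n : ℕ}
    {α β γ : ℤ} (hαβ : α ≤ β) (hβγ : β ≤ γ)
    (τ : Fin n → ℤ → ℤ)
    (hτ : ∀ i, ∀ t ∈ Icc β (γ - 1), α ≤ τ i t ∧ τ i t ≤ t)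
    (φ : ℤ → X)
    (p : Fin n → ℤ → X →L[ℝ] X) (q : ℤ → X)
    -- the principal solution `𝒳(t, ζ) = XX t ζ`
    (XX : ℤ → ℤ → X →L[ℝ] X)
    (hXX0 : ∀ ζ ∈ Icc β γ, ∀ t ∈ Ico α ζ, XX t ζ = 0)
    (hXXinit : ∀ ζ ∈ Icc β γ, XX ζ ζ = ContinuousLinearMap.id ℝ X)
    (hXXrec : ∀ ζ ∈ Icc β γ, ∀ t ∈ Icc ζ (γ - 1),
      XX (t + 1) ζ = XX t ζ + ∑ i, (p i t).comp (XX (τ i t) ζ))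
    -- the solution of the discrete linear delay initial value problem
    (x : ℤ → X)
    (hxφ : ∀ t ∈ Icc α β, x t = φ t)
    (hx : ∀ t ∈ Icc β (γ - 1),
      x (t + 1) - x t = ∑ i, p i t (x (τ i t)) + q t) :
    ∀ t ∈ Icc β γ,
      x t = XX t β (φ β) + (∑ s ∈ Finset.Ico β t, XX t (s + 1) (q s)) +
        ∑ s ∈ Finset.Ico β t, XX t (s + 1)
          (∑ i, if τ i s < β then p i s (φ (τ i s)) else 0) := by
  set f : ℤ → X := fun s => q s + ∑ i, if τ i s < β then p i s (φ (τ i s)) else 0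
  set v := variationOfParameters XX β γ (φ β) f
  have hxv : EqOn x (fun t => v t + if t < β then φ t else 0) (Icc α γ) := by
    refine eqOn_Icc_of_delay_recurrence hαβ hτ (fun t y => ∑ i, p i t (y i) + q t) ?_ hx ?_
    · rintro t ⟨hαt, htβ⟩
      obtain htβ | rfl := htβ.lt_or_eq
      · simp [v, variationOfParameters_eq_zero_of_lt hβγ hXX0 _ f ⟨hαt, htβ⟩, htβ,
          hxφ t ⟨hαt, htβ.le⟩]
      · simp [v, variationOfParameters_self hαβ hβγ hXX0 hXXinit, hxφ t ⟨hαt, le_rfl⟩]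
    · intro t ht
      have hdelay : ∀ i, p i t (v (τ i t) + if τ i t < β then φ (τ i t) else 0) =
          p i t (v (τ i t)) + if τ i t < β then p i t (φ (τ i t)) else 0 := fun i => by
        split_ifs <;> simp
      simp only [if_neg (show ¬t + 1 < β by linarith [ht.1]), if_neg (not_lt.2 ht.1),
        add_zero, hdelay, v, variationOfParameters_succ_sub hαβ hτ hXX0 hXXinit hXXrec _ f ht,
        f, Finset.sum_add_distrib]
      abel
  intro t ht
  rw [hxv ⟨hαβ.trans ht.1, ht.2⟩]
  simp only [if_neg (not_lt.2 ht.1), add_zero, v,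
    variationOfParameters_eq_sum_Ico hXX0 _ f ⟨hαβ.trans ht.1, ht.2⟩,
    f, map_add, Finset.sum_add_distrib, add_assoc]

/-- Variation of parameters (solution representation) formula for linear delay
equations on the integer time scale, where `σ(s) = s + 1` and the delta
derivative is the forward difference. -/
theorem discrete_linear_delay_variation_of_parameters
    {X : Type*} [NormedAddCommGroup X] [NormedSpace ℝ X] [CompleteSpace X]
    {n : ℕ} (hn : 0 < n)
    {α β γ : ℤ} (hαβ : α ≤ β) (hβγ : β ≤ γ)
    (τ : Fin n → ℤ → ℤ)
    (hτ : ∀ i, ∀ t ∈ Icc β (γ - 1), α ≤ τ i t ∧ τ i t ≤ t)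
    (φ : ℤ → X)
    (p : Fin n → ℤ → X →L[ℝ] X) (q : ℤ → X)
    -- the principal solution `𝒳(t, ζ) = XX t ζ`
    (XX : ℤ → ℤ → X →L[ℝ] X)
    (hXX0 : ∀ ζ ∈ Icc β γ, ∀ t ∈ Ico α ζ, XX t ζ = 0)
    (hXXinit : ∀ ζ ∈ Icc β γ, XX ζ ζ = ContinuousLinearMap.id ℝ X)
    (hXXrec : ∀ ζ ∈ Icc β γ, ∀ t ∈ Icc ζ (γ - 1),
      XX (t + 1) ζ = XX t ζ + ∑ i, (p i t).comp (XX (τ i t) ζ))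
    -- the solution of the discrete linear delay initial value problem
    (x : ℤ → X)
    (hxφ : ∀ t ∈ Icc α β, x t = φ t)
    (hx : ∀ t ∈ Icc β (γ - 1),
      x (t + 1) - x t = ∑ i, p i t (x (τ i t)) + q t) :
    ∀ t ∈ Icc β γ,
      x t = XX t β (φ β) + (∑ s ∈ Finset.Ico β t, XX t (s + 1) (q s)) +
        ∑ s ∈ Finset.Ico β t, XX t (s + 1)
          (∑ i, if τ i s < β then p i s (φ (τ i s)) else 0) :=
  discrete_linear_delay_variation_of_parameters_general hαβ hβγ τ hτ φ p q XX hXX0 hXXinit hXXrec x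
    hxφ hx
end
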